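/- arXiv:1505.00692 — 10 statements merged into one kernel-verified Lean document; each statement's English description precedes it below -/
import Mathlib

section
/- Let G be an unweighted undirected n-vertex graph with source s such that shortest paths are made unique via a tie-breaking weight assignment W. For a fixed vertex v and a fixed path π(s,v), consider single-failure replacement paths P₁,...,P_t, where P_i is the shortest s–v path avoiding an edge e_i ∈ π(s,v), each P_i has a unique divergence point b_i from π(s,v), each suffix P_i[b_i,v] is edge-disjoint from π(s,v), and the last edges LastE(P_i) are pairwise distinct and distinct from LastE(π(s,v)). Then the suffixes P_i[b_i,v] \ {v} are pairwise vertex-disjoint. -/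
/-- The `W`-weight of a walk: the sum of the weights of its edges. -/
def walkWeight {V : Type*} (W : Sym2 V → ℝ) {G : SimpleGraph V} {u v : V}
    (p : G.Walk u v) : ℝ := (p.edges.map W).sum

section Aux
variable {V : Type*} {G : SimpleGraph V} (W : Sym2 V → ℝ)

lemma walkWeight_append {u v w : V} (p : G.Walk u v) (q : G.Walk v w) :
    walkWeight W (p.append q) = walkWeight W p + walkWeight W q := by
  simp [walkWeight, SimpleGraph.Walk.edges_append]

lemma walkWeight_nonneg (hW : ∀ e, 0 < W e) {u v : V} (p : G.Walk u v) :
    0 ≤ walkWeight W p := by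
  apply List.sum_nonneg
  intro x hx
  obtain ⟨f, -, rfl⟩ := List.mem_map.mp hx
  exact (hW f).le

lemma walkWeight_dropUntil_le [DecidableEq V] (hW : ∀ e, 0 < W e) {u v w : V}
    (p : G.Walk v w) (h : u ∈ p.support) :
    walkWeight W (p.dropUntil u h) ≤ walkWeight W p := by
  have hs := p.take_spec h
  have := walkWeight_append W (p.takeUntil u h) (p.dropUntil u h)
  rw [hs] at this
  have := walkWeight_nonneg W hW (p.takeUntil u h)
  linarith

lemma walkWeight_bypass_le [DecidableEq V] (hW : ∀ e, 0 < W e) {u v : V}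
    (p : G.Walk u v) : walkWeight W p.bypass ≤ walkWeight W p := by
  induction p with
  | nil => simp [SimpleGraph.Walk.bypass]
  | cons h p ih =>
      rename_i u' v' w'
      rw [SimpleGraph.Walk.bypass]
      have hcons : walkWeight W (SimpleGraph.Walk.cons h p) = W s(u', v') + walkWeight W p := by
        simp [walkWeight]
      have hpos : (0:ℝ) ≤ W s(u', v') := (hW _).le
      split_ifs with hs
      · have h1 := walkWeight_dropUntil_le W hW p.bypass hs
        rw [hcons]; linarith
      · have hcons2 : walkWeight W (SimpleGraph.Walk.cons h p.bypass) =
            W s(u', v') + walkWeight W p.bypass := by simp [walkWeight]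
        rw [hcons, hcons2]; linarith

lemma edges_ne_nil_of_ne {u v : V} (p : G.Walk u v) (h : u ≠ v) : p.edges ≠ [] := by
  cases p with
  | nil => exact absurd rfl h
  | cons h q => simp

end Aux

/-- Single-failure replacement paths setup: `π = π(s,v)` is the shortest
`s–v` path, and `P_i = π[s,b_i] ∘ Q_i` (`i = 1,…,t`) are replacement paths, where `P_i` is a
shortest `s–v` path avoiding the failed edge `e_i ∈ π`, it has unique divergence point `b_i`
from `π`, its suffix `Q_i = P_i[b_i, v]` is edge-disjoint from `π`, and the last edges of the
`P_i` are pairwise distinct and distinct from the last edge of `π`.  Under the weight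
assignment `W` guaranteeing uniqueness of shortest paths (here: of shortest `w–v` paths
avoiding the edges of `π`), the suffixes `Q_i \ {v}` are pairwise vertex-disjoint. -/
theorem replacement_suffixes_disjoint {V : Type*} [DecidableEq V]
    (G : SimpleGraph V) (W : Sym2 V → ℝ) (hW : ∀ e, 0 < W e)
    (s v : V) (π : G.Walk s v) (hπ : π.IsPath)
    (hπopt : ∀ R : G.Walk s v, R.IsPath → walkWeight W π ≤ walkWeight W R)
    (t : ℕ) (b : Fin t → V) (hb : ∀ i, b i ∈ π.support)
    (Q : (i : Fin t) → G.Walk (b i) v)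
    (e : Fin t → Sym2 V) (he : ∀ i, e i ∈ π.edges)
    (hpath : ∀ i, ((π.takeUntil (b i) (hb i)).append (Q i)).IsPath)
    (havoid : ∀ i, e i ∉ ((π.takeUntil (b i) (hb i)).append (Q i)).edges)
    (hshort : ∀ i, ∀ R : G.Walk s v, R.IsPath → e i ∉ R.edges →
      walkWeight W ((π.takeUntil (b i) (hb i)).append (Q i)) ≤ walkWeight W R)
    (hsuffix : ∀ i, ∀ f ∈ (Q i).edges, f ∉ π.edges)
    (hlast : ∀ i j, i ≠ j →
      ((π.takeUntil (b i) (hb i)).append (Q i)).edges.getLast? ≠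
      ((π.takeUntil (b j) (hb j)).append (Q j)).edges.getLast?)
    (hlastπ : ∀ i, ((π.takeUntil (b i) (hb i)).append (Q i)).edges.getLast? ≠
      π.edges.getLast?)
    (huniq : ∀ (w : V) (p q : G.Walk w v), p.IsPath → q.IsPath →
      (∀ f ∈ p.edges, f ∉ π.edges) → (∀ f ∈ q.edges, f ∉ π.edges) →
      (∀ r : G.Walk w v, r.IsPath → (∀ f ∈ r.edges, f ∉ π.edges) →
        walkWeight W p ≤ walkWeight W r) →
      (∀ r : G.Walk w v, r.IsPath → (∀ f ∈ r.edges, f ∉ π.edges) →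
        walkWeight W q ≤ walkWeight W r) →
      p = q) :
    ∀ i j, i ≠ j → ∀ x ∈ (Q i).support, x ∈ (Q j).support → x = v := by
  intro i j hij x hxi hxj
  by_contra hxv
  -- suffixes from x to v
  set Si := (Q i).dropUntil x hxi with hSi
  set Sj := (Q j).dropUntil x hxj with hSj
  -- paths
  have hQpath : ∀ k (hxk : x ∈ (Q k).support), ((Q k).dropUntil x hxk).IsPath := by
    intro k hxk
    exact ((hpath k).of_append_right).dropUntil hxk
  -- avoidance of π edges
  have havoidS : ∀ k (hxk : x ∈ (Q k).support),
      ∀ f ∈ ((Q k).dropUntil x hxk).edges, f ∉ π.edges := by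
    intro k hxk f hf
    exact hsuffix k f ((Q k).edges_dropUntil_subset hxk hf)
  -- optimality of the suffixes
  have hopt : ∀ k (hxk : x ∈ (Q k).support), ∀ r : G.Walk x v, r.IsPath →
      (∀ f ∈ r.edges, f ∉ π.edges) →
      walkWeight W ((Q k).dropUntil x hxk) ≤ walkWeight W r := by
    intro k hxk r hr hravoid
    set Wk := (π.takeUntil (b k) (hb k)).append (((Q k).takeUntil x hxk).append r) with hWk
    have hRavoid : e k ∉ Wk.bypass.edges := by
      intro hmem
      have hmem' := Wk.edges_bypass_subset hmem
      rw [hWk, SimpleGraph.Walk.edges_append, SimpleGraph.Walk.edges_append] at hmem'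
      rcases List.mem_append.mp hmem' with h1 | h2
      · exact havoid k (by rw [SimpleGraph.Walk.edges_append]; exact List.mem_append.mpr (Or.inl h1))
      · rcases List.mem_append.mp h2 with h3 | h4
        · have : e k ∈ (Q k).edges := (Q k).edges_takeUntil_subset hxk h3
          exact havoid k (by rw [SimpleGraph.Walk.edges_append]; exact List.mem_append.mpr (Or.inr this))
        · exact hravoid (e k) h4 (he k)
    have h1 := hshort k Wk.bypass Wk.bypass_isPath hRavoid
    have h2 := walkWeight_bypass_le W hW Wk
    have h3 : walkWeight W Wk = walkWeight W (π.takeUntil (b k) (hb k)) +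
        walkWeight W ((Q k).takeUntil x hxk) + walkWeight W r := by
      rw [hWk, walkWeight_append, walkWeight_append]; ring
    have h4 : walkWeight W ((π.takeUntil (b k) (hb k)).append (Q k)) =
        walkWeight W (π.takeUntil (b k) (hb k)) +
        walkWeight W ((Q k).takeUntil x hxk) + walkWeight W ((Q k).dropUntil x hxk) := by
      rw [walkWeight_append]
      have := walkWeight_append W ((Q k).takeUntil x hxk) ((Q k).dropUntil x hxk)
      rw [(Q k).take_spec hxk] at this
      rw [this]; ring
    linarith
  -- the two suffixes are equal
  have hSeq : Si = Sj :=
    huniq x Si Sj (hQpath i hxi) (hQpath j hxj) (havoidS i hxi) (havoidS j hxj)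
      (hopt i hxi) (hopt j hxj)
  -- derive equality of last edges, contradiction
  have hlastE : ∀ k (hxk : x ∈ (Q k).support),
      ((π.takeUntil (b k) (hb k)).append (Q k)).edges.getLast? =
      ((Q k).dropUntil x hxk).edges.getLast? := by
    intro k hxk
    have hQ : (Q k).edges = ((Q k).takeUntil x hxk).edges ++ ((Q k).dropUntil x hxk).edges := by
      conv_lhs => rw [← (Q k).take_spec hxk]
      rw [SimpleGraph.Walk.edges_append]
    have hne : ((Q k).dropUntil x hxk).edges ≠ [] :=
      edges_ne_nil_of_ne _ hxv
    rw [SimpleGraph.Walk.edges_append, hQ, List.getLast?_append, List.getLast?_append]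
    obtain ⟨a, ha⟩ := List.getLast?_isSome.mpr hne |> Option.isSome_iff_exists.mp
    simp [ha]
  have := hlast i j hij
  rw [hlastE i hxi, hlastE j hxj] at this
  rw [hSi, hSj] at hSeq
  exact this (by rw [hSeq])
end

section
/- Let N₁,...,N_z be nonnegative integers and M, n positive reals with z·M/2 + Σ_{j=1}^z (N_j−1)²/2 ≤ n and Σ_{j=1}^z N_j ≥ M. Then M = O(n^{2/3}); concretely M ≤ C·n^{2/3} for an absolute constant C. -/
/-- If `N₁,…,N_z` are nonnegative integers and `M, n` positive reals with
`z·M/2 + Σ_j (N_j − 1)²/2 ≤ n` and `Σ_j N_j ≥ M`, then `M ≤ C·n^{2/3}` for an absolute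
constant `C`. -/
theorem expensive_paths_count_bound : ∃ C : ℝ, 0 < C ∧
    ∀ (z : ℕ) (N : Fin z → ℕ) (M n : ℝ), 0 < M → 0 < n →
      (z : ℝ) * M / 2 + (∑ j, ((N j : ℝ) - 1) ^ 2) / 2 ≤ n →
      M ≤ ∑ j, (N j : ℝ) →
      M ≤ C * n ^ ((2 : ℝ) / 3) := by
  refine ⟨4, by norm_num, ?_⟩
  intro z N M n hM hn hsum hMS
  set S : ℝ := ∑ j, (N j : ℝ) with hS
  set T : ℝ := ∑ j, ((N j : ℝ) - 1) ^ 2 with hT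
  have hT0 : 0 ≤ T := Finset.sum_nonneg fun i _ => sq_nonneg _
  have hz1 : 1 ≤ (z : ℝ) := by
    rcases Nat.eq_zero_or_pos z with h | h
    · subst h
      simp [hS, Finset.univ_eq_empty] at hMS
      linarith
    · exact_mod_cast h
  have hnpos23 : (0:ℝ) < n ^ ((2:ℝ)/3) := Real.rpow_pos_of_pos hn _
  rcases le_or_gt n 1 with hn1 | hn1
  · -- small n : M ≤ 2n ≤ 2 n^{2/3}
    have hM2n : M ≤ 2 * n := by nlinarith
    have : n ≤ n ^ ((2:ℝ)/3) := by
      calc n = n ^ (1:ℝ) := (Real.rpow_one n).symm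
        _ ≤ n ^ ((2:ℝ)/3) := Real.rpow_le_rpow_of_exponent_ge hn hn1 (by norm_num)
    linarith
  · have hcube : (n ^ ((2:ℝ)/3)) ^ 3 = n ^ 2 := by
      rw [← Real.rpow_natCast (n ^ ((2:ℝ)/3)) 3, ← Real.rpow_mul hn.le]
      norm_num
    rcases le_or_gt (M / 2) (z : ℝ) with hzl | hzl
    · -- M² ≤ 4 n, so M ≤ 2 √n ≤ 2 n^{2/3}
      have hM2 : M ^ 2 ≤ 4 * n := by nlinarith
      have h12 : n ^ ((1:ℝ)/2) ≤ n ^ ((2:ℝ)/3) :=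
        Real.rpow_le_rpow_of_exponent_le hn1.le (by norm_num)
      have hsq : (n ^ ((1:ℝ)/2)) ^ 2 = n := by
        rw [← Real.rpow_natCast (n ^ ((1:ℝ)/2)) 2, ← Real.rpow_mul hn.le]
        norm_num
      have hpos : (0:ℝ) < n ^ ((1:ℝ)/2) := Real.rpow_pos_of_pos hn _
      have : M ≤ 2 * n ^ ((1:ℝ)/2) := by nlinarith
      linarith
    · -- Cauchy–Schwarz branch
      have hcs : (∑ j, ((N j : ℝ) - 1)) ^ 2 ≤ (z : ℝ) * T := by
        have := sq_sum_le_card_mul_sum_sq (s := (Finset.univ : Finset (Fin z)))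
          (f := fun j => ((N j : ℝ) - 1))
        simpa [hT] using this
      have hsz : ∑ j, ((N j : ℝ) - 1) = S - z := by
        simp [hS, Finset.sum_sub_distrib]
      rw [hsz] at hcs
      have hSz : M / 2 ≤ S - z := by linarith
      have h1 : M ^ 2 / 4 ≤ (z : ℝ) * T := by nlinarith
      have hzM : (z : ℝ) * M ≤ 2 * n := by linarith
      have hT2n : T ≤ 2 * n := by nlinarith
      have hM3 : M ^ 3 ≤ 16 * n ^ 2 := by nlinarith
      by_contra hcon
      push_neg at hcon
      have h4 : (4 * n ^ ((2:ℝ)/3)) ^ 3 < M ^ 3 :=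
        pow_lt_pow_left₀ hcon (by positivity) (by norm_num)
      nlinarith [hcube, pow_pos hn 2]
end

section
/- Let ℓ be a positive integer and let z, N₁,...,N_z be nonnegative integers with ℓ = Σ_{i=1}^z N_i, and suppose Σ_{i=1}^z Σ_{k=1}^i N_k + Σ_{i=1}^z N_i² ≤ c·n for a constant c. Then ℓ = O(n^{2/3}). -/
open Finset

private lemma ipc_card_ge (z : ℕ) (k : Fin z) :
    (univ.filter (fun i : Fin z => k ≤ i)).card = z - k.val := by
  rw [← Fin.card_Ici k]; congr 1; ext i; simp [Finset.mem_Ici]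

/-- Let `ℓ` be a positive integer, `z, N₁,…,N_z` nonnegative integers with
`ℓ = Σ_i N_i`, and suppose `Σ_{i=1}^z Σ_{k=1}^i N_k + Σ_{i=1}^z N_i² ≤ c·n` for a constant
`c`. Then `ℓ = O(n^{2/3})` (the implied constant depending only on `c`). -/
theorem intersecting_paths_count_bound :
    ∀ c : ℝ, 0 < c → ∃ C : ℝ, 0 < C ∧
      ∀ (n : ℝ) (z : ℕ) (N : Fin z → ℕ) (ℓ : ℕ), 0 < n → 0 < ℓ →
        ℓ = ∑ i, N i →
        (∑ i : Fin z, ∑ k ∈ Finset.univ.filter (fun k : Fin z => k ≤ i), (N k : ℝ)) +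
          (∑ i : Fin z, (N i : ℝ) ^ 2) ≤ c * n →
        (ℓ : ℝ) ≤ C * n ^ ((2 : ℝ) / 3) := by
  intro c hc
  refine ⟨c + Real.sqrt (2 * c), by positivity, ?_⟩
  intro n z N ℓ hn hl hls hsum
  -- rewrite the double sum as a weighted sum
  have hD : ∑ i : Fin z, ∑ k ∈ univ.filter (fun k : Fin z => k ≤ i), (N k : ℝ)
      = ∑ k : Fin z, ((z - k.val : ℕ) : ℝ) * (N k : ℝ) := by
    simp only [Finset.sum_filter]
    rw [Finset.sum_comm]
    refine Finset.sum_congr rfl fun k _ => ?_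
    rw [← Finset.sum_filter, Finset.sum_const, ipc_card_ge z k, nsmul_eq_mul]
  have hS2nonneg : (0:ℝ) ≤ ∑ i : Fin z, (N i : ℝ) ^ 2 := by positivity
  have hDnonneg : (0:ℝ) ≤ ∑ i : Fin z, ∑ k ∈ univ.filter (fun k : Fin z => k ≤ i), (N k : ℝ) := by
    positivity
  have hW : ∑ k : Fin z, ((z - k.val : ℕ) : ℝ) * (N k : ℝ) ≤ c * n := by
    rw [← hD]; linarith
  have hS2 : ∑ i : Fin z, (N i : ℝ) ^ 2 ≤ c * n := by linarith
  have hℓ : (ℓ:ℝ) = ∑ k : Fin z, (N k : ℝ) := by rw [hls]; push_cast; ring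
  have hwt1 : ∀ k : Fin z, (1:ℝ) ≤ ((z - k.val : ℕ) : ℝ) := by
    intro k
    have : 1 ≤ z - k.val := by omega
    exact_mod_cast this
  have hℓleW : (ℓ:ℝ) ≤ c * n := by
    rw [hℓ]
    calc ∑ k : Fin z, (N k : ℝ) ≤ ∑ k : Fin z, ((z - k.val : ℕ) : ℝ) * (N k : ℝ) := by
          refine Finset.sum_le_sum fun k _ => ?_
          nlinarith [hwt1 k, (N k).cast_nonneg (α := ℝ)]
      _ ≤ c * n := hW
  have hsqrt_nonneg : (0:ℝ) ≤ Real.sqrt (2 * c) := Real.sqrt_nonneg _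
  rcases le_or_gt n 1 with h1 | h1
  · -- small n : ℓ ≤ c n ≤ c n^{2/3}
    have hmono : n ≤ n ^ ((2:ℝ)/3) := by
      have := Real.rpow_le_rpow_of_exponent_ge hn h1 (by norm_num : (2:ℝ)/3 ≤ 1)
      rwa [Real.rpow_one] at this
    have hp : (0:ℝ) ≤ n ^ ((2:ℝ)/3) := by positivity
    nlinarith
  · -- large n
    have hn3 : (0:ℝ) < n ^ ((1:ℝ)/3) := Real.rpow_pos_of_pos hn _
    have hn3ge1 : (1:ℝ) ≤ n ^ ((1:ℝ)/3) := by
      have := Real.rpow_le_rpow (by norm_num : (0:ℝ) ≤ 1) h1.le (by norm_num : (0:ℝ) ≤ 1/3)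
      rwa [Real.one_rpow] at this
    set T : ℕ := ⌈n ^ ((1:ℝ)/3)⌉₊ with hTdef
    have hT1 : n ^ ((1:ℝ)/3) ≤ (T:ℝ) := Nat.le_ceil _
    have hT2 : (T:ℝ) ≤ 2 * n ^ ((1:ℝ)/3) := by
      have := Nat.ceil_lt_add_one (le_of_lt (Real.rpow_pos_of_pos hn ((1:ℝ)/3)))
      linarith
    set B : Finset (Fin z) := univ.filter (fun k : Fin z => T + 1 ≤ z - k.val) with hBdef
    set A : Finset (Fin z) := univ.filter (fun k : Fin z => ¬ (T + 1 ≤ z - k.val)) with hAdef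
    have hsplit : (ℓ:ℝ) = (∑ k ∈ B, (N k : ℝ)) + (∑ k ∈ A, (N k : ℝ)) := by
      rw [hℓ, hBdef, hAdef, Finset.sum_filter_add_sum_filter_not]
    -- bound on B
    have hBsum : ((T:ℝ) + 1) * ∑ k ∈ B, (N k : ℝ) ≤ c * n := by
      rw [Finset.mul_sum]
      calc ∑ k ∈ B, ((T:ℝ) + 1) * (N k : ℝ)
          ≤ ∑ k ∈ B, ((z - k.val : ℕ) : ℝ) * (N k : ℝ) := by
            refine Finset.sum_le_sum fun k hk => ?_
            have hk' : T + 1 ≤ z - k.val := by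
              simpa [hBdef] using hk
            have : ((T:ℝ) + 1) ≤ ((z - k.val : ℕ) : ℝ) := by exact_mod_cast hk'
            exact mul_le_mul_of_nonneg_right this (N k).cast_nonneg
        _ ≤ ∑ k : Fin z, ((z - k.val : ℕ) : ℝ) * (N k : ℝ) := by
            refine Finset.sum_le_sum_of_subset_of_nonneg (Finset.filter_subset _ _)
              fun k _ _ => by positivity
        _ ≤ c * n := hW
    have hB : ∑ k ∈ B, (N k : ℝ) ≤ c * n / ((T:ℝ) + 1) := by
      rw [le_div_iff₀ (by linarith)]
      linarith [hBsum]
    -- bound on A : card A ≤ T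
    have hAcard : A.card ≤ T := by
      have himg : A.image Fin.val ⊆ Finset.Ico (z - T) z := by
        intro x hx
        simp only [Finset.mem_image] at hx
        obtain ⟨k, hk, rfl⟩ := hx
        have hk' : ¬ (T + 1 ≤ z - k.val) := by simpa [hAdef] using hk
        have := k.isLt
        simp only [Finset.mem_Ico]
        omega
      have := Finset.card_le_card himg
      rw [Finset.card_image_of_injective _ Fin.val_injective] at this
      rw [Nat.card_Ico] at this
      omega
    have hAcs : (∑ k ∈ A, (N k : ℝ)) ^ 2 ≤ (T:ℝ) * (c * n) := by
      calc (∑ k ∈ A, (N k : ℝ)) ^ 2 ≤ A.card * ∑ k ∈ A, (N k : ℝ) ^ 2 :=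
            sq_sum_le_card_mul_sum_sq
        _ ≤ (T:ℝ) * (c * n) := by
            refine mul_le_mul ?_ ?_ (by positivity) (by positivity)
            · exact_mod_cast hAcard
            · calc ∑ k ∈ A, (N k : ℝ) ^ 2 ≤ ∑ k : Fin z, (N k : ℝ) ^ 2 :=
                  Finset.sum_le_sum_of_subset_of_nonneg (Finset.filter_subset _ _)
                    fun k _ _ => by positivity
                _ ≤ c * n := hS2
    -- key rpow identities
    have hid1 : n ^ ((2:ℝ)/3) * n ^ ((1:ℝ)/3) = n := by
      rw [← Real.rpow_add hn]; norm_num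
    have hid2 : n ^ ((1:ℝ)/3) * n = (n ^ ((2:ℝ)/3)) ^ 2 := by
      have h4 : (n ^ ((2:ℝ)/3)) ^ (2:ℕ) = n ^ ((4:ℝ)/3) := by
        rw [← Real.rpow_natCast (n ^ ((2:ℝ)/3)) 2, ← Real.rpow_mul hn.le]; norm_num
      have e1 : n ^ ((3:ℝ)/3) = n := by
        rw [show (3:ℝ)/3 = 1 by norm_num, Real.rpow_one]
      calc n ^ ((1:ℝ)/3) * n = n ^ ((1:ℝ)/3) * n ^ ((3:ℝ)/3) := by rw [e1]
        _ = n ^ ((4:ℝ)/3) := by rw [← Real.rpow_add hn]; norm_num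
        _ = (n ^ ((2:ℝ)/3)) ^ 2 := h4.symm
    have hp23 : (0:ℝ) ≤ n ^ ((2:ℝ)/3) := by positivity
    -- B part ≤ c * n^{2/3}
    have hBfin : ∑ k ∈ B, (N k : ℝ) ≤ c * n ^ ((2:ℝ)/3) := by
      refine hB.trans ?_
      rw [div_le_iff₀ (by linarith)]
      have : c * n = c * n ^ ((2:ℝ)/3) * n ^ ((1:ℝ)/3) := by rw [mul_assoc, hid1]
      rw [this]
      have h1' : n ^ ((1:ℝ)/3) ≤ (T:ℝ) + 1 := by linarith
      nlinarith [hp23, hc.le]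
    -- A part ≤ sqrt(2c) * n^{2/3}
    have hAfin : ∑ k ∈ A, (N k : ℝ) ≤ Real.sqrt (2 * c) * n ^ ((2:ℝ)/3) := by
      have hA2 : (∑ k ∈ A, (N k : ℝ)) ^ 2 ≤ (2 * c) * (n ^ ((2:ℝ)/3)) ^ 2 := by
        calc (∑ k ∈ A, (N k : ℝ)) ^ 2 ≤ (T:ℝ) * (c * n) := hAcs
          _ ≤ (2 * n ^ ((1:ℝ)/3)) * (c * n) := by
              refine mul_le_mul_of_nonneg_right hT2 (by positivity)
          _ = (2 * c) * (n ^ ((1:ℝ)/3) * n) := by ring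
          _ = (2 * c) * (n ^ ((2:ℝ)/3)) ^ 2 := by rw [hid2]
      have hAnn : (0:ℝ) ≤ ∑ k ∈ A, (N k : ℝ) := by positivity
      calc ∑ k ∈ A, (N k : ℝ) = Real.sqrt ((∑ k ∈ A, (N k : ℝ)) ^ 2) := (Real.sqrt_sq hAnn).symm
        _ ≤ Real.sqrt ((2 * c) * (n ^ ((2:ℝ)/3)) ^ 2) := Real.sqrt_le_sqrt hA2
        _ = Real.sqrt (2 * c) * n ^ ((2:ℝ)/3) := by
            rw [Real.sqrt_mul (by positivity), Real.sqrt_sq hp23]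
    calc (ℓ:ℝ) = (∑ k ∈ B, (N k : ℝ)) + (∑ k ∈ A, (N k : ℝ)) := hsplit
      _ ≤ c * n ^ ((2:ℝ)/3) + Real.sqrt (2 * c) * n ^ ((2:ℝ)/3) := add_le_add hBfin hAfin
      _ = (c + Real.sqrt (2 * c)) * n ^ ((2:ℝ)/3) := by ring
end

section
/- Consider the kernel construction: given an (x,y)-ordered sequence of detours D₁ ≺ D₂ ≺ ... ≺ D_t (paths with designated start x_i and end y_i), where at step i the prefix D_i[x_i, w_i] is added, w_i being the first vertex of D_i lying in the already-built graph K^{i−1} = ⋃_{j<i} D_j[x_j, w_j] (with w₁ = y₁). If all detours end at the same vertex y' (y-interleaved family) and any two detours agree on the subpath between any two common vertices, then the number of maximal path-segments (regions) of the final kernel K between consecutive branch/end-points is at most 2t. -/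
/-!
Write `P i` for the prefix `D i [x i, w i]` and `B` for the marked vertices `{x i} ∪ {w i}`.
A prefix meets the earlier ones only at its end `w i ∈ B`, so every vertex outside `B` lies on
at most one prefix; since the interior of a region avoids `B`, each region runs inside a single
prefix `P i`. A path all of whose edges lie on the path `P i` is a segment of `P i`, and a
segment whose interior avoids `B` is determined by `i` and by its end `a` nearer to `x i`.
That end is `x i` or some `w k` other than `w i`, and a vertex `w k` is a non-final vertex of
at most one prefix, which leaves at most `t + t` choices of `(i, a)`.
-/

namespace List

variable {α : Type*} {L r r' : List α} {a b c : α}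

theorem Nodup.prefix_or_prefix_of_cons_infix (hL : L.Nodup) (h : a :: r <:+: L)
    (h' : a :: r' <:+: L) : a :: r <+: a :: r' ∨ a :: r' <+: a :: r := by
  induction L with
  | nil => simp at h
  | cons d L ih =>
    rw [infix_cons_iff] at h h'
    rcases h with h | h <;> rcases h' with h' | h'
    · exact prefix_or_prefix_of_prefix h h'
    · exact absurd (h'.subset mem_cons_self) ((cons_prefix_cons.1 h).1 ▸ (nodup_cons.1 hL).1)
    · exact absurd (h.subset mem_cons_self) ((cons_prefix_cons.1 h').1 ▸ (nodup_cons.1 hL).1)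
    · exact ih hL.of_cons h h'

theorem Nodup.eq_of_pair_infix (hL : L.Nodup) (h : [a, b] <:+: L) (h' : [a, c] <:+: L) :
    b = c := by
  rcases hL.prefix_or_prefix_of_cons_infix h h' with h | h
  · simpa using h
  · exact (by simpa using h : c = b).symm

theorem Nodup.cons_infix_of_pair_infix (hL : L.Nodup) (h : [a, b] <:+: L) (h' : b :: r <:+: L) :
    a :: b :: r <:+: L := by
  induction L with
  | nil => simp at h
  | cons d L ih =>
    obtain ⟨hdL, hLt⟩ := nodup_cons.1 hL
    rw [infix_cons_iff] at h h'
    rcases h with h | h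
    · obtain ⟨rfl, L', hL'⟩ := cons_prefix_cons.1 h
      rw [singleton_append] at hL'
      subst hL'
      rw [infix_cons_iff] at h'
      rcases h' with h' | h' | h'
      · exact absurd (cons_prefix_cons.1 h').1 (fun hba => hdL (hba ▸ mem_cons_self))
      · exact (cons_prefix_cons.2 ⟨rfl, h'⟩).isInfix
      · exact absurd (h'.subset mem_cons_self) (nodup_cons.1 hLt).1
    · rcases h' with h' | h'
      · exact absurd (h.subset (by simp)) ((cons_prefix_cons.1 h').1 ▸ hdL)
      · exact (ih hLt h h').trans (suffix_cons d L).isInfix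

theorem Nodup.ne_getLast_of_pair_infix (hL : L.Nodup) (h : [a, b] <:+: L) (hne : L ≠ []) :
    a ≠ L.getLast hne := by
  induction L with
  | nil => simp at hne
  | cons d L ih =>
    obtain ⟨hdL, hLt⟩ := nodup_cons.1 hL
    rw [infix_cons_iff] at h
    rcases h with h | h
    · obtain ⟨rfl, L', hL'⟩ := cons_prefix_cons.1 h
      rw [singleton_append] at hL'
      subst hL'
      rw [getLast_cons (cons_ne_nil _ _)]
      exact fun h => hdL (h ▸ getLast_mem _)
    · have hL0 : L ≠ [] := by rintro rfl; simp at h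
      rw [getLast_cons hL0]
      exact ih hLt h hL0

theorem Nodup.cons_cons_infix_of_edge (hL : L.Nodup) (hab : [a, b] <:+: L ∨ [b, a] <:+: L)
    (h : b :: c :: r <:+: L) (hac : a ≠ c) : a :: b :: c :: r <:+: L := by
  rcases hab with hab | hba
  · exact hL.cons_infix_of_pair_infix hab h
  · have hbc : [b, c] <:+: L := (prefix_append [b, c] r).isInfix.trans h
    exact absurd (hL.eq_of_pair_infix hba hbc) hac

end List

namespace Set

theorem ncard_le_ncard_of_forall_subsingleton {α β : Type*} {s : Set α} {t : Set β}
    (r : α → β → Prop) (ht : t.Finite) (hs : ∀ a ∈ s, ∃ b ∈ t, r a b)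
    (hr : ∀ b ∈ t, {a ∈ s | r a b}.Subsingleton) : s.ncard ≤ t.ncard := by
  obtain rfl | ⟨a₀, ha₀⟩ := s.eq_empty_or_nonempty
  · simp
  have : Nonempty β := ⟨(hs a₀ ha₀).choose⟩
  choose! f hft hfr using hs
  exact ncard_le_ncard_of_injOn f hft
    (fun a ha a' ha' h => hr _ (hft a ha) ⟨ha, hfr a ha⟩ ⟨ha', h ▸ hfr a' ha'⟩) ht

end Set

namespace SimpleGraph

variable {V : Type*} {G H : SimpleGraph V}

namespace Walk

theorem IsPath.ne_of_length_pos {u v : V} {p : H.Walk u v} (hp : p.IsPath) (hlen : 0 < p.length) :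
    u ≠ v := by
  rintro rfl
  exact hlen.ne' (length_eq_zero_iff.2 (isPath_iff_nil.1 hp))

theorem support_infix_or_infix_reverse_of_edges_subset {c d : V} {Q : G.Walk c d}
    (hQ : Q.IsPath) : ∀ {u v : V} (p : H.Walk u v), p.IsPath → 0 < p.length →
      (∀ e ∈ p.edges, e ∈ Q.edges) → p.support <:+: Q.support ∨ p.support <:+: Q.support.reverse
  | _, _, nil, _, hlen, _ => absurd hlen (lt_irrefl 0)
  | u, _, cons (v := u') _ nil, _, _, hsub => by
    rcases infix_support_iff_mem_edges.2 (hsub s(u, u') (by simp)) with h | h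
    · exact Or.inl (by simpa using h)
    · exact Or.inr (by simpa using List.reverse_infix.2 h)
  | u, _, cons (v := u') _ (cons (v := u'') _ q), hp, _, hsub => by
    have hp' := (cons_isPath_iff _ _).1 hp
    have hne : u ≠ u'' := fun h => hp'.2 (by simp [h])
    have hedge := infix_support_iff_mem_edges.2 (hsub s(u, u') (by simp))
    have ih := support_infix_or_infix_reverse_of_edges_subset hQ _ hp'.1 (by simp)
      fun e he => hsub e (List.mem_cons_of_mem _ he)
    simp only [support_cons] at ih ⊢
    rw [← q.cons_tail_support] at ih ⊢
    rcases ih with h | h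
    · exact Or.inl (hQ.support_nodup.cons_cons_infix_of_edge hedge h hne)
    · refine Or.inr ((List.nodup_reverse.2 hQ.support_nodup).cons_cons_infix_of_edge ?_ h hne)
      rcases hedge with h' | h'
      · exact Or.inr (by simpa using List.reverse_infix.2 h')
      · exact Or.inl (by simpa using List.reverse_infix.2 h')

theorem ne_end_of_support_infix {c d a b : V} {Q : G.Walk c d} (hQ : Q.IsPath)
    {p : H.Walk a b} (hlen : 0 < p.length) (hpQ : p.support <:+: Q.support) : a ≠ d := by
  cases p with
  | nil => exact absurd hlen (lt_irrefl 0)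
  | cons _ q =>
    rw [support_cons, ← q.cons_tail_support] at hpQ
    have h := hQ.support_nodup.ne_getLast_of_pair_infix
      ((List.prefix_append [a, _] _).isInfix.trans hpQ) Q.support_ne_nil
    rwa [Q.getLast_support] at h

theorem support_eq_of_support_prefix {B : Set V} {a b b' : V} {p : H.Walk a b}
    {p' : H.Walk a b'} (hp' : p'.IsPath) (hlen : 0 < p.length) (hpre : p.support <+: p'.support)
    (hb : b ∈ B) (hint' : ∀ z ∈ p'.support, z ≠ a → z ≠ b' → z ∉ B) :
    p.support = p'.support := by
  obtain ⟨m, hm⟩ := hpre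
  cases m with
  | nil => simpa using hm
  | cons c m =>
    have hnd := hp'.support_nodup
    rw [← hm] at hnd
    have hab : a ≠ b := ((isPath_def p).2 (List.nodup_append.1 hnd).1).ne_of_length_pos hlen
    have hb' : b' ∈ c :: m := by
      have h := p'.getLast_support
      simp only [← hm] at h
      rw [List.getLast_append_of_ne_nil _ (List.cons_ne_nil c m)] at h
      exact h ▸ List.getLast_mem _
    have hbb' : b ≠ b' := fun h =>
      (List.nodup_append.1 hnd).2.2 b p.end_mem_support b' hb' h
    exact absurd hb (hint' b (hm ▸ List.mem_append_left _ p.end_mem_support) hab.symm hbb')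

theorem exists_forall_mem_of_interior_not_mem {ι : Type*} {F : ι → Set (Sym2 V)}
    {B : Set V} (hF : ∀ z ∉ B, ∀ i j, ∀ e ∈ F i, ∀ e' ∈ F j, z ∈ e → z ∈ e' → i = j) :
    ∀ {u v : V} (p : H.Walk u v), p.IsPath → 0 < p.length → (∀ e ∈ p.edges, ∃ i, e ∈ F i) →
      (∀ z ∈ p.support, z ≠ u → z ≠ v → z ∉ B) → ∃ i, ∀ e ∈ p.edges, e ∈ F i
  | _, _, nil, _, hlen, _, _ => absurd hlen (lt_irrefl 0)
  | u, _, cons (v := u') _ nil, _, _, hedges, _ => by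
    obtain ⟨i, hi⟩ := hedges s(u, u') (by simp)
    exact ⟨i, by simpa using hi⟩
  | u, _, cons (v := u') h (cons (v := u'') h' q), hp, _, hedges, hint => by
    have hp' := (cons_isPath_iff _ _).1 hp
    obtain ⟨i, hi⟩ := hedges s(u, u') (by simp)
    obtain ⟨j, hj⟩ := exists_forall_mem_of_interior_not_mem hF (cons h' q) hp'.1 (by simp)
      (fun e he => hedges e (List.mem_cons_of_mem _ he))
      (fun z hz hzu' hzv => hint z (List.mem_cons_of_mem _ hz) (fun h => hp'.2 (h ▸ hz)) hzv)
    have hu' : u' ∉ B := hint u' (by simp) h.ne.symm (hp'.1.ne_of_length_pos (by simp))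
    obtain rfl : i = j := hF u' hu' i j _ hi _ (hj s(u', u'') (by simp)) (by simp) (by simp)
    exact ⟨i, by simpa [hi] using hj⟩

end Walk

def regions (H : SimpleGraph V) (B : Set V) : Set (Set (Sym2 V)) :=
  {E | ∃ u v, u ∈ B ∧ v ∈ B ∧ ∃ p : H.Walk u v, p.IsPath ∧ 0 < p.length ∧
    (∀ z ∈ p.support, z ≠ u → z ≠ v → z ∉ B) ∧ {e | e ∈ p.edges} = E}

def IsRegionAlong (H : SimpleGraph V) (B : Set V) (L : List V) (a : V) (E : Set (Sym2 V)) :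
    Prop :=
  ∃ b ∈ B, ∃ p : H.Walk a b, 0 < p.length ∧ p.support <:+: L ∧
    (∀ z ∈ p.support, z ≠ a → z ≠ b → z ∉ B) ∧ {e | e ∈ p.edges} = E

theorem IsRegionAlong.unique {B : Set V} {L : List V} {a : V} {E E' : Set (Sym2 V)}
    (hL : L.Nodup) (h : IsRegionAlong H B L a E) (h' : IsRegionAlong H B L a E') : E = E' := by
  obtain ⟨b, hb, p, hlen, hpL, hint, rfl⟩ := h
  obtain ⟨b', hb', p', hlen', hpL', hint', rfl⟩ := h'
  have hp := (Walk.isPath_def p).2 (hpL.nodup hL)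
  have hp' := (Walk.isPath_def p').2 (hpL'.nodup hL)
  rw [← p.cons_tail_support] at hpL
  rw [← p'.cons_tail_support] at hpL'
  have hsupp : p.support = p'.support := by
    rcases hL.prefix_or_prefix_of_cons_infix hpL hpL' with hpre | hpre
    · rw [p.cons_tail_support, p'.cons_tail_support] at hpre
      exact Walk.support_eq_of_support_prefix hp' hlen hpre hb hint'
    · rw [p.cons_tail_support, p'.cons_tail_support] at hpre
      exact (Walk.support_eq_of_support_prefix hp hlen' hpre hb' hint).symm
  obtain rfl : b = b' := by
    have h := p.getLast_support
    simp only [hsupp, Walk.getLast_support] at h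
    exact h.symm
  rw [Walk.ext_support hsupp]

theorem exists_isRegionAlong_of_edges_subset {B : Set V} {c d u v : V} {Q : G.Walk c d}
    (hQ : Q.IsPath) {p : H.Walk u v} (hp : p.IsPath) (hlen : 0 < p.length) (hu : u ∈ B)
    (hv : v ∈ B) (hint : ∀ z ∈ p.support, z ≠ u → z ≠ v → z ∉ B)
    (hsub : ∀ e ∈ p.edges, e ∈ Q.edges) :
    ∃ a ∈ B, a ∈ Q.support ∧ a ≠ d ∧ IsRegionAlong H B Q.support a {e | e ∈ p.edges} := by
  rcases Walk.support_infix_or_infix_reverse_of_edges_subset hQ p hp hlen hsub with hpQ | hpQ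
  · exact ⟨u, hu, hpQ.subset p.start_mem_support, Walk.ne_end_of_support_infix hQ hlen hpQ,
      v, hv, p, hlen, hpQ, hint, rfl⟩
  · have hlen' : 0 < p.reverse.length := by simpa using hlen
    have hpQ' : p.reverse.support <:+: Q.support :=
      List.reverse_infix.1 (by simpa using hpQ)
    refine ⟨v, hv, hpQ'.subset p.reverse.start_mem_support,
      Walk.ne_end_of_support_infix hQ hlen' hpQ', u, hu, p.reverse, hlen', hpQ',
      fun z hz hzv hzu => hint z (by simpa using hz) hzu hzv, by simp [Walk.edges_reverse]⟩

variable {ι : Type*} {x w : ι → V}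

def kernel (P : ∀ i, G.Walk (x i) (w i)) : SimpleGraph V :=
  fromEdgeSet {e | ∃ i, e ∈ (P i).edges}

def regionStarts (P : ∀ i, G.Walk (x i) (w i)) (B : Set V) : Set (ι × V) :=
  {q | q.2 ∈ B ∧ q.2 ∈ (P q.1).support ∧ q.2 ≠ w q.1}

def MeetsEarlierOnlyAtEnd [LT ι] (P : ∀ i, G.Walk (x i) (w i)) : Prop :=
  ∀ i j, j < i → ∀ u ∈ (P j).support, u ∈ (P i).support → u = w i

variable {P : ∀ i, G.Walk (x i) (w i)}

theorem finite_regionStarts [Finite ι] (B : Set V) : (regionStarts P B).Finite :=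
  (Set.finite_univ.prod (Set.finite_iUnion fun i => (P i).support.finite_toSet)).subset
    fun q hq => ⟨trivial, Set.mem_iUnion.2 ⟨q.1, hq.2.1⟩⟩

variable [LinearOrder ι]

theorem MeetsEarlierOnlyAtEnd.eq_of_mem_support (hP : MeetsEarlierOnlyAtEnd P) {i j : ι} {u : V}
    (hi : u ∈ (P i).support) (hj : u ∈ (P j).support) (hui : u ≠ w i) (huj : u ≠ w j) :
    i = j := by
  rcases lt_trichotomy i j with h | h | h
  · exact absurd (hP j i h u hi hj) huj
  · exact h
  · exact absurd (hP i j h u hj hi) hui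

theorem exists_isRegionAlong_of_mem_regions (hP : MeetsEarlierOnlyAtEnd P)
    (hpath : ∀ i, (P i).IsPath) {E : Set (Sym2 V)}
    (hE : E ∈ regions (kernel P) (Set.range x ∪ Set.range w)) :
    ∃ q ∈ regionStarts P (Set.range x ∪ Set.range w),
      IsRegionAlong (kernel P) (Set.range x ∪ Set.range w) (P q.1).support q.2 E := by
  obtain ⟨u, v, hu, hv, p, hp, hlen, hint, rfl⟩ := hE
  have hF : ∀ z ∉ Set.range x ∪ Set.range w, ∀ i j, ∀ e ∈ {e | e ∈ (P i).edges},
      ∀ e' ∈ {e | e ∈ (P j).edges}, z ∈ e → z ∈ e' → i = j :=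
    fun z hz i j e he e' he' hze hze' =>
      hP.eq_of_mem_support (Walk.mem_support_of_mem_edges he hze)
        (Walk.mem_support_of_mem_edges he' hze')
        (fun h => hz (Or.inr ⟨i, h.symm⟩)) (fun h => hz (Or.inr ⟨j, h.symm⟩))
  have hkernel : ∀ e ∈ p.edges, ∃ i, e ∈ (P i).edges := fun e he => by
    have he' := p.edges_subset_edgeSet he
    rw [kernel, edgeSet_fromEdgeSet] at he'
    exact he'.1
  obtain ⟨i, hi⟩ := Walk.exists_forall_mem_of_interior_not_mem hF p hp hlen hkernel hint
  obtain ⟨a, ha, haP, haw, hreg⟩ :=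
    exists_isRegionAlong_of_edges_subset (hpath i) hp hlen hu hv hint hi
  exact ⟨(i, a), ⟨ha, haP, haw⟩, hreg⟩

theorem ncard_regionStarts_le [Fintype ι] (hP : MeetsEarlierOnlyAtEnd P) :
    (regionStarts P (Set.range x ∪ Set.range w)).ncard ≤ 2 * Fintype.card ι := by
  calc (regionStarts P (Set.range x ∪ Set.range w)).ncard
      ≤ (Set.univ : Set (ι ⊕ ι)).ncard := by
        refine Set.ncard_le_ncard_of_forall_subsingleton
          (fun q s => s = .inl q.1 ∧ q.2 = x q.1 ∨ ∃ k, s = .inr k ∧ q.2 = w k)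
          Set.finite_univ ?_ ?_
        · rintro ⟨i, a⟩ ⟨⟨k, rfl⟩ | ⟨k, rfl⟩, haP, haw⟩
          · rcases lt_trichotomy k i with h | rfl | h
            · exact absurd (hP i k h _ (P k).start_mem_support haP) haw
            · exact ⟨.inl k, trivial, Or.inl ⟨rfl, rfl⟩⟩
            · exact ⟨.inr k, trivial, Or.inr ⟨k, rfl, hP k i h _ haP (P k).start_mem_support⟩⟩
          · exact ⟨.inr k, trivial, Or.inr ⟨k, rfl, rfl⟩⟩
        · rintro (i | k) - ⟨i₁, a₁⟩ ⟨⟨-, hP₁, hw₁⟩, h₁⟩ ⟨i₂, a₂⟩ ⟨⟨-, hP₂, hw₂⟩, h₂⟩ <;>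
            dsimp only at h₁ h₂ hP₁ hP₂ hw₁ hw₂
          · obtain ⟨⟨⟩, rfl⟩ | ⟨_, ⟨⟩, -⟩ := h₁
            obtain ⟨⟨⟩, rfl⟩ | ⟨_, ⟨⟩, -⟩ := h₂
            rfl
          · obtain ⟨⟨⟩, -⟩ | ⟨_, ⟨⟩, rfl⟩ := h₁
            obtain ⟨⟨⟩, -⟩ | ⟨_, ⟨⟩, rfl⟩ := h₂
            rw [hP.eq_of_mem_support hP₁ hP₂ hw₁ hw₂]
    _ = 2 * Fintype.card ι := by simp [Set.ncard_univ, two_mul]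

theorem ncard_regions_kernel_le [Fintype ι] (hP : MeetsEarlierOnlyAtEnd P)
    (hpath : ∀ i, (P i).IsPath) :
    (regions (kernel P) (Set.range x ∪ Set.range w)).ncard ≤ 2 * Fintype.card ι :=
  calc (regions (kernel P) (Set.range x ∪ Set.range w)).ncard
      ≤ (regionStarts P (Set.range x ∪ Set.range w)).ncard :=
        Set.ncard_le_ncard_of_forall_subsingleton
          (fun E q => IsRegionAlong (kernel P) _ (P q.1).support q.2 E) (finite_regionStarts _)
          (fun _ hE => exists_isRegionAlong_of_mem_regions hP hpath hE)
          (fun q _ _ hE _ hE' => hE.2.unique (hpath q.1).support_nodup hE'.2)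
    _ ≤ 2 * Fintype.card ι := ncard_regionStarts_le hP

end SimpleGraph

theorem kernel_num_regions_le_general {V : Type*} [DecidableEq V] (G : SimpleGraph V)
    (t : ℕ) (y' : V) (x : Fin t → V)
    (D : (i : Fin t) → G.Walk (x i) y')
    (hDpath : ∀ i, (D i).IsPath)
    (w : Fin t → V) (hw : ∀ i, w i ∈ (D i).support)
    (hfirst : ∀ i : Fin t, ∀ u ∈ ((D i).takeUntil (w i) (hw i)).support,
      (∃ j, j < i ∧ u ∈ ((D j).takeUntil (w j) (hw j)).support) → u = w i) :
    {E : Set (Sym2 V) | ∃ (u v : V),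
        u ∈ (Set.range x ∪ Set.range w) ∧ v ∈ (Set.range x ∪ Set.range w) ∧
        ∃ p : (SimpleGraph.fromEdgeSet
            {e | ∃ i, e ∈ ((D i).takeUntil (w i) (hw i)).edges}).Walk u v,
          p.IsPath ∧ 0 < p.length ∧
          (∀ z ∈ p.support, z ≠ u → z ≠ v → z ∉ (Set.range x ∪ Set.range w)) ∧
          {e | e ∈ p.edges} = E}.ncard ≤ 2 * t := by
  have h := SimpleGraph.ncard_regions_kernel_le (P := fun i => (D i).takeUntil (w i) (hw i))
    (fun i j hji u huj hui => hfirst i u hui ⟨j, hji, huj⟩) (fun i => (hDpath i).takeUntil _)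
  rw [Fintype.card_fin] at h
  exact h

/-- The kernel construction: an `(x,y)`-ordered family of detours
`D 0 ≺ D 1 ≺ … ≺ D (t-1)`, all ending at the same vertex `y'` (a `y`-interleaved family),
such that any two detours agree on the subpath between any two common vertices (`hagree`:
suffixes from any common vertex coincide).  At step `i`, the prefix `(D i).takeUntil (w i)`
is added to the kernel, where `w i` is the first vertex of `D i` lying in the
already-built kernel `⋃_{j<i} (D j).takeUntil (w j)` (and `w 0 = y'`).  Then the number of
regions of the final kernel — maximal path-segments whose endpoints are marked points of
`B = range x ∪ range w` and whose interior avoids `B`, identified here with their edge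
sets — is at most `2·t`. -/
theorem kernel_num_regions_le {V : Type*} [Fintype V] [DecidableEq V] (G : SimpleGraph V)
    (t : ℕ) (y' : V) (x : Fin t → V)
    (D : (i : Fin t) → G.Walk (x i) y')
    (hDpath : ∀ i, (D i).IsPath)
    (hagree : ∀ i j : Fin t, ∀ (u : V) (hu : u ∈ (D i).support) (hu' : u ∈ (D j).support),
      (D i).dropUntil u hu = (D j).dropUntil u hu')
    (w : Fin t → V) (hw : ∀ i, w i ∈ (D i).support)
    (hw0 : ∀ i : Fin t, (i : ℕ) = 0 → w i = y')
    (hwin : ∀ i : Fin t, 0 < (i : ℕ) →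
      ∃ j, j < i ∧ w i ∈ ((D j).takeUntil (w j) (hw j)).support)
    (hfirst : ∀ i : Fin t, ∀ u ∈ ((D i).takeUntil (w i) (hw i)).support,
      (∃ j, j < i ∧ u ∈ ((D j).takeUntil (w j) (hw j)).support) → u = w i) :
    {E : Set (Sym2 V) | ∃ (u v : V),
        u ∈ (Set.range x ∪ Set.range w) ∧ v ∈ (Set.range x ∪ Set.range w) ∧
        ∃ p : (SimpleGraph.fromEdgeSet
            {e | ∃ i, e ∈ ((D i).takeUntil (w i) (hw i)).edges}).Walk u v,
          p.IsPath ∧ 0 < p.length ∧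
          (∀ z ∈ p.support, z ≠ u → z ≠ v → z ∉ (Set.range x ∪ Set.range w)) ∧
          {e | e ∈ p.edges} = E}.ncard ≤ 2 * t :=
  kernel_num_regions_le_general G t y' x D hDpath w hw hfirst
end

section
/- In the same kernel construction on a y-interleaved family of detours all ending at y', every region R of the kernel is entirely contained in some detour D_i of the family. -/
/-- The kernel construction: an `(x,y)`-ordered family of detours
`D 0 ≺ D 1 ≺ … ≺ D (t-1)`, all ending at the same vertex `y'` (a `y`-interleaved family),
such that any two detours agree on the subpath between any two common vertices (`hagree`:
suffixes from any common vertex coincide).  At step `i`, the prefix `(D i).takeUntil (w i)`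
is added to the kernel, where `w i` is the first vertex of `D i` lying in the
already-built kernel `⋃_{j<i} (D j).takeUntil (w j)` (and `w 0 = y'`).  **Statement 11.** Then every region of the final
kernel — a maximal path-segment whose endpoints are marked points of
`B = range x ∪ range w` and whose interior avoids `B` — is entirely contained in some
detour `D i` of the family. -/
theorem kernel_region_in_some_detour {V : Type*} [Fintype V] [DecidableEq V] (G : SimpleGraph V)
    (t : ℕ) (y' : V) (x : Fin t → V)
    (D : (i : Fin t) → G.Walk (x i) y')
    (hDpath : ∀ i, (D i).IsPath)
    (hagree : ∀ i j : Fin t, ∀ (u : V) (hu : u ∈ (D i).support) (hu' : u ∈ (D j).support),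
      (D i).dropUntil u hu = (D j).dropUntil u hu')
    (w : Fin t → V) (hw : ∀ i, w i ∈ (D i).support)
    (hw0 : ∀ i : Fin t, (i : ℕ) = 0 → w i = y')
    (hwin : ∀ i : Fin t, 0 < (i : ℕ) →
      ∃ j, j < i ∧ w i ∈ ((D j).takeUntil (w j) (hw j)).support)
    (hfirst : ∀ i : Fin t, ∀ u ∈ ((D i).takeUntil (w i) (hw i)).support,
      (∃ j, j < i ∧ u ∈ ((D j).takeUntil (w j) (hw j)).support) → u = w i) :
    ∀ (u v : V), u ∈ (Set.range x ∪ Set.range w) → v ∈ (Set.range x ∪ Set.range w) →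
      ∀ p : (SimpleGraph.fromEdgeSet
          {e | ∃ i, e ∈ ((D i).takeUntil (w i) (hw i)).edges}).Walk u v,
        p.IsPath → 0 < p.length →
        (∀ z ∈ p.support, z ≠ u → z ≠ v → z ∉ (Set.range x ∪ Set.range w)) →
        ∃ i, ∀ f ∈ p.edges, f ∈ (D i).edges := by
  classical
  intro u v hu hv p hp hlen hint
  -- key lemma: an unmarked vertex lies in at most one prefix
  have key : ∀ (b : V) (j k : Fin t), b ∈ ((D j).takeUntil (w j) (hw j)).support →
      b ∈ ((D k).takeUntil (w k) (hw k)).support → b ∉ Set.range w → j = k := by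
    intro b j k hbj hbk hbw
    rcases lt_trichotomy j k with h | h | h
    · exact absurd ⟨k, (hfirst k b hbk ⟨j, h, hbj⟩).symm⟩ hbw
    · exact h
    · exact absurd ⟨j, (hfirst j b hbj ⟨k, h, hbk⟩).symm⟩ hbw
  have L : ∀ (b : V) (q : (SimpleGraph.fromEdgeSet
        {e | ∃ i, e ∈ ((D i).takeUntil (w i) (hw i)).edges}).Walk b v),
      q.IsPath → (∀ z ∈ q.support, z ≠ v → z ∉ Set.range w) →
      ∀ j, b ∈ ((D j).takeUntil (w j) (hw j)).support →
      ∀ f ∈ q.edges, f ∈ ((D j).takeUntil (w j) (hw j)).edges := by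
    clear hint hlen hp p hv
    intro b q
    induction q with
    | nil => intro _ _ j _ f hf; simp at hf
    | @cons b c d h q' ih =>
      intro hq hintq j hbj f hf
      obtain ⟨⟨k, hk⟩, hbc⟩ := ((SimpleGraph.fromEdgeSet_adj _).mp h)
      have hbk : b ∈ ((D k).takeUntil (w k) (hw k)).support :=
        SimpleGraph.Walk.fst_mem_support_of_mem_edges _ hk
      have hck : c ∈ ((D k).takeUntil (w k) (hw k)).support :=
        SimpleGraph.Walk.snd_mem_support_of_mem_edges _ hk
      have hq' : q'.IsPath := (SimpleGraph.Walk.cons_isPath_iff _ _).mp hq |>.1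
      have hbq' : b ∉ q'.support := (SimpleGraph.Walk.cons_isPath_iff _ _).mp hq |>.2
      have hbv : b ≠ d := by
        intro hbv; exact hbq' (hbv ▸ q'.end_mem_support)
      have hbw : b ∉ Set.range w :=
        hintq b (SimpleGraph.Walk.start_mem_support _) hbv
      have hjk : j = k := key b j k hbj hbk hbw
      subst hjk
      rcases (by simpa using hf : f = s(b, c) ∨ f ∈ q'.edges) with rfl | hf'
      · exact hk
      · exact ih hq' (fun z hz => hintq z (by simp [hz]) ) j hck f hf'
  cases p with
  | nil => simp at hlen
  | @cons _ c _ h q =>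
    obtain ⟨⟨k, hk⟩, huc⟩ := ((SimpleGraph.fromEdgeSet_adj _).mp h)
    have hck : c ∈ ((D k).takeUntil (w k) (hw k)).support :=
      SimpleGraph.Walk.snd_mem_support_of_mem_edges _ hk
    have hq : q.IsPath := (SimpleGraph.Walk.cons_isPath_iff _ _).mp hp |>.1
    have huq : u ∉ q.support := (SimpleGraph.Walk.cons_isPath_iff _ _).mp hp |>.2
    have hintq : ∀ z ∈ q.support, z ≠ v → z ∉ Set.range w := by
      intro z hz hzv hzw
      have hzu : z ≠ u := fun e => huq (e ▸ hz)
      exact hint z (by simp [hz]) hzu hzv (Or.inr hzw)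
    refine ⟨k, ?_⟩
    intro f hf
    have hsub : ((D k).takeUntil (w k) (hw k)).edges ⊆ (D k).edges :=
      SimpleGraph.Walk.edges_takeUntil_subset _ _
    rcases (by simpa using hf : f = s(u, c) ∨ f ∈ q.edges) with rfl | hf'
    · exact hsub hk
    · exact hsub (L c q hq hintq k hck f hf')
end

section
/- In the lower-bound graph G_f(d), for every leaf z_j: (1) there is a unique path P(z_j) from the root u^f₁ to z_j; (2) this path survives the deletion of the ≤ f edges in Label_f(z_j); (3) for every i > j, the path P(z_i) does not survive the deletion of Label_f(z_j); and (4) for every i < j, |P(z_i)| > |P(z_j)|. -/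
/-!
Every edge of `Gf f d` joins a vertex to its unique `rel`-predecessor, and the root has no
predecessor; so a path that ends at the root has to step to the predecessor at every vertex, and
root-to-vertex paths are unique. The path to the leaf `j` is written down as an explicit vertex
sequence whose `k`-th vertex has depth `k`: it runs along the top path to `u_{j 0}`, down
`Q_{j 0}`, and then recursively inside copy `j 0`. Hence it never uses the top edge
`(u_{j 0}, u_{j 0 + 1})` of `Label(z_j)`, while the path to a leaf further right either crosses
that edge or, inside the common copy, an edge of the recursive label.

For the lengths: `i + |Q_i|` decreases by a fixed slope per step of `i`, and this slope exceeds the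
spread of root-to-leaf lengths inside a copy of `G_{f-1}`.
-/

/-- Depth of the lower-bound graph `G_f(d)`. -/
def depthG : ℕ → ℕ → ℕ
  | 0, _ => 0
  | 1, d => 6 + 2 * (d - 1)
  | (f + 2), d => d * depthG (f + 1) d

/-- Length of the connecting path `Q_i` at the top level of `G_{f+1}(d+1)` (vertices of the
top path are indexed by `i : Fin (d+1)`, zero-based): at level `1` (i.e. `f = 0`) it is
`6 + 2(d - i)`, and for `f ≥ 1` it is `(d + 1 - i) · depth(f, d+1)`. -/
def QLen (f d : ℕ) (i : Fin (d + 1)) : ℕ :=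
  match f with
  | 0 => 6 + 2 * (d - (i : ℕ))
  | (f' + 1) => (d + 1 - (i : ℕ)) * depthG (f' + 1) (d + 1)

/-- Vertex type of the lower-bound graph `G_f(d+1)`: `G_0` is a single vertex (a leaf);
`G_{f+1}` consists of the top path vertices `u_0,…,u_d`, the internal vertices `(i,k)` of
the connecting paths `Q_i`, and `d+1` disjoint copies of `G_f`. -/
def Vtx : ℕ → ℕ → Type
  | 0, _ => Unit
  | (f + 1), d => (Fin (d + 1)) ⊕ ((Fin (d + 1)) × ℕ) ⊕ ((Fin (d + 1)) × Vtx f d)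

/-- The root of `G_f(d+1)` (the first vertex `u_0` of the top path). -/
def rootVtx : (f d : ℕ) → Vtx f d
  | 0, _ => ()
  | (_ + 1), _ => Sum.inl 0

/-- One-directional adjacency relation generating `G_f(d+1)`. -/
def rel : (f d : ℕ) → Vtx f d → Vtx f d → Prop
  | 0, _, _, _ => False
  | (_ + 1), _, Sum.inl a, Sum.inl b => (a : ℕ) + 1 = (b : ℕ)
  | (f + 1), d, Sum.inl a, Sum.inr (Sum.inl ik) =>
      ik.1 = a ∧ ik.2 = 1 ∧ 2 ≤ QLen f d ik.1
  | (f + 1), d, Sum.inl a, Sum.inr (Sum.inr iu) =>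
      iu.1 = a ∧ QLen f d iu.1 ≤ 1 ∧ iu.2 = rootVtx f d
  | (f + 1), d, Sum.inr (Sum.inl ik), Sum.inr (Sum.inl ik') =>
      ik.1 = ik'.1 ∧ ik.2 + 1 = ik'.2 ∧ 1 ≤ ik.2 ∧ ik'.2 + 1 ≤ QLen f d ik.1
  | (f + 1), d, Sum.inr (Sum.inl ik), Sum.inr (Sum.inr iu) =>
      ik.1 = iu.1 ∧ ik.2 + 1 = QLen f d ik.1 ∧ 1 ≤ ik.2 ∧ iu.2 = rootVtx f d
  | (f + 1), _, Sum.inr (Sum.inr iu), Sum.inr (Sum.inr iu') =>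
      iu.1 = iu'.1 ∧ rel f _ iu.2 iu'.2
  | _, _, _, _ => False

/-- The lower-bound graph `G_f(d+1)` as a simple graph. -/
def Gf (f d : ℕ) : SimpleGraph (Vtx f d) := SimpleGraph.fromRel (rel f d)

/-- The leaf of `G_f(d+1)` addressed by a tuple `j : Fin f → Fin (d+1)` of copy choices
(leaves are ordered left to right by the lexicographic order on these tuples). -/
def leafVtx : (f d : ℕ) → (Fin f → Fin (d + 1)) → Vtx f d
  | 0, _, _ => ()
  | (f + 1), d, j => Sum.inr (Sum.inr (j 0, leafVtx f d (fun m => j m.succ)))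

/-- Embedding of the `i`-th copy of `G_f(d+1)` into `G_{f+1}(d+1)`. -/
def copyEmb (f d : ℕ) (i : Fin (d + 1)) : Vtx f d → Vtx (f + 1) d :=
  fun u => Sum.inr (Sum.inr (i, u))

/-- The label of a leaf: the set of at most `f` failed edges associated with it.  For the
leaf addressed by `j`, it consists of the top-path edge `(u_{j 0}, u_{j 0 + 1})` (when it
exists, i.e. `j 0 < d`) together with the (embedded) label of the leaf in the copy. -/
def labelG : (f d : ℕ) → (Fin f → Fin (d + 1)) → Set (Sym2 (Vtx f d))
  | 0, _, _ => ∅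
  | (f + 1), d, j =>
      (if h : (j 0 : ℕ) < d then
        {s((Sum.inl (j 0) : Vtx (f + 1) d),
           (Sum.inl (⟨(j 0 : ℕ) + 1, by omega⟩ : Fin (d + 1)) : Vtx (f + 1) d))}
      else ∅) ∪
      (Sym2.map (copyEmb f d (j 0)) '' labelG f d (fun m => j m.succ))

/-- Lexicographic (left-to-right) order on leaf addresses. -/
def lexLt {f d : ℕ} (j j' : Fin f → Fin (d + 1)) : Prop :=
  ∃ k : Fin f, (∀ m : Fin f, m < k → j m = j' m) ∧ j k < j' k


namespace SimpleGraph

variable {V : Type*}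

section FromRel

variable {r : V → V → Prop} {root : V}

theorem rel_of_cons_isPath_to_root (hpred : ∀ a b c, r a c → r b c → a = b)
    (hroot : ∀ a, ¬ r a root) {v w : V} (h : (fromRel r).Adj v w) (p : (fromRel r).Walk w root)
    (hp : (Walk.cons h p).IsPath) : r w v := by
  induction p generalizing v with
  | nil =>
    obtain ⟨-, hvw | hwv⟩ := (fromRel_adj _ _ _).1 h
    · exact absurd hvw (hroot v)
    · exact hwv
  | @cons w x _ h' p ih =>
    have hxw : r x w := ih hroot h' hp.of_cons
    obtain ⟨-, hvw | hwv⟩ := (fromRel_adj _ _ _).1 h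
    · obtain rfl : x = v := hpred x v w hxw hvw
      exact absurd (Walk.support_cons _ _ ▸ List.mem_cons_of_mem _ p.start_mem_support)
        ((Walk.cons_isPath_iff _ _).1 hp).2
    · exact hwv

theorem isPath_to_root_unique (hpred : ∀ a b c, r a c → r b c → a = b)
    (hroot : ∀ a, ¬ r a root) {v : V} (p q : (fromRel r).Walk v root)
    (hp : p.IsPath) (hq : q.IsPath) : p = q := by
  induction p with
  | nil => exact (Walk.eq_nil_iff_nil.2 (Walk.isPath_iff_nil.1 hq)).symm
  | @cons v w _ h p ih =>
    cases q with
    | nil => exact absurd (Walk.isPath_iff_nil.1 hp) Walk.not_nil_cons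
    | cons h' q =>
      obtain rfl := hpred _ _ v (rel_of_cons_isPath_to_root hpred hroot h p hp)
        (rel_of_cons_isPath_to_root hpred hroot h' q hq)
      rw [ih hroot q hp.of_cons hq.of_cons]

theorem isPath_from_root_unique (hpred : ∀ a b c, r a c → r b c → a = b)
    (hroot : ∀ a, ¬ r a root) {v : V} (p q : (fromRel r).Walk root v)
    (hp : p.IsPath) (hq : q.IsPath) : p = q :=
  Walk.reverse_injective <| isPath_to_root_unique hpred hroot _ _ hp.reverse hq.reverse

end FromRel

variable (G : SimpleGraph V)

def Walk.ofFun (g : ℕ → V) : (n : ℕ) → (∀ k < n, G.Adj (g k) (g (k + 1))) → G.Walk (g 0) (g n)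
  | 0, _ => .nil
  | n + 1, h => (Walk.ofFun g n fun k hk => h k (by omega)).concat (h n (by omega))

variable {G} {g : ℕ → V}

namespace Walk

theorem length_ofFun (n : ℕ) (h : ∀ k < n, G.Adj (g k) (g (k + 1))) :
    (ofFun G g n h).length = n := by
  induction n with
  | zero => rfl
  | succ n ih => simp [ofFun, ih]

theorem support_ofFun (n : ℕ) (h : ∀ k < n, G.Adj (g k) (g (k + 1))) :
    (ofFun G g n h).support = (List.range (n + 1)).map g := by
  induction n with
  | zero => rfl
  | succ n ih => simp [ofFun, ih, List.range_succ]

theorem mem_edges_ofFun {e : Sym2 V} (n : ℕ) (h : ∀ k < n, G.Adj (g k) (g (k + 1))) :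
    e ∈ (ofFun G g n h).edges ↔ ∃ k < n, s(g k, g (k + 1)) = e := by
  induction n with
  | zero => simp [ofFun]
  | succ n ih =>
    simp only [ofFun, edges_concat, List.concat_eq_append, List.mem_append, ih,
      List.mem_singleton]
    constructor
    · rintro (⟨k, hk, rfl⟩ | rfl)
      exacts [⟨k, by omega, rfl⟩, ⟨n, by omega, rfl⟩]
    · rintro ⟨k, hk, rfl⟩
      rcases Nat.lt_succ_iff_lt_or_eq.1 hk with hk | rfl
      exacts [Or.inl ⟨k, hk, rfl⟩, Or.inr rfl]

theorem isPath_ofFun (n : ℕ) (h : ∀ k < n, G.Adj (g k) (g (k + 1)))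
    (hg : Set.InjOn g (Set.Iic n)) : (ofFun G g n h).IsPath := by
  rw [isPath_def, support_ofFun]
  refine List.Nodup.map_on (fun a ha b hb => hg ?_ ?_) List.nodup_range
  · simpa [Nat.lt_succ_iff] using ha
  · simpa [Nat.lt_succ_iff] using hb

end Walk

end SimpleGraph

theorem not_rel_rootVtx : ∀ (f d : ℕ) (a : Vtx f d), ¬ rel f d a (rootVtx f d)
  | 0, _, _ => id
  | _ + 1, _, Sum.inl a => fun h => by simp [rootVtx, rel] at h
  | _ + 1, _, Sum.inr (Sum.inl _) => id
  | _ + 1, _, Sum.inr (Sum.inr _) => id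

/-- The delicate case is a copy root: its candidate predecessors `u_i` (when `QLen ≤ 1`) and the
last vertex of `Q_i` (when `QLen ≥ 2`) exclude each other, and inside the copy it has none. -/
theorem rel_left_unique : ∀ (f d : ℕ) (a b c : Vtx f d), rel f d a c → rel f d b c → a = b
  | 0, _, _, _, _, h, _ => h.elim
  | f + 1, d, a, b, c, hac, hbc => by
    have ih := rel_left_unique f d
    have hroot := not_rel_rootVtx f d
    rcases a with a | ⟨a₁, a₂⟩ | ⟨a₁, a₂⟩ <;> rcases b with b | ⟨b₁, b₂⟩ | ⟨b₁, b₂⟩ <;>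
      rcases c with c | ⟨c₁, c₂⟩ | ⟨c₁, c₂⟩ <;> simp only [rel] at hac hbc ⊢
    all_goals grind

theorem six_le_depthG (f d : ℕ) : 6 ≤ depthG (f + 1) (d + 1) := by
  induction f with
  | zero => simp [depthG]
  | succ f ih =>
    calc 6 ≤ depthG (f + 1) (d + 1) := ih
      _ ≤ (d + 1) * depthG (f + 1) (d + 1) := Nat.le_mul_of_pos_left _ d.succ_pos

theorem two_le_QLen (f d : ℕ) (i : Fin (d + 1)) : 2 ≤ QLen f d i := by
  cases f with
  | zero => simp only [QLen]; omega
  | succ f =>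
    calc 2 ≤ depthG (f + 1) (d + 1) := by linarith [six_le_depthG f d]
      _ ≤ (d + 1 - i) * depthG (f + 1) (d + 1) := Nat.le_mul_of_pos_left _ (by omega)

def vtxDepth : (f d : ℕ) → Vtx f d → ℕ
  | 0, _, _ => 0
  | _ + 1, _, Sum.inl a => a
  | _ + 1, _, Sum.inr (Sum.inl ik) => ik.1 + ik.2
  | f + 1, d, Sum.inr (Sum.inr iu) => iu.1 + QLen f d iu.1 + vtxDepth f d iu.2

def leafPathLength : (f d : ℕ) → (Fin f → Fin (d + 1)) → ℕ
  | 0, _, _ => 0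
  | f + 1, d, j => j 0 + QLen f d (j 0) + leafPathLength f d (Fin.tail j)

/-- The `k`-th vertex of the path `P(z_j)` from the root to the leaf addressed by `j`
(meaningful for `k ≤ leafPathLength f d j`). -/
def leafPathVtx : (f d : ℕ) → (Fin f → Fin (d + 1)) → ℕ → Vtx f d
  | 0, _, _, _ => ()
  | f + 1, d, j, k =>
    if h : k ≤ j 0 then Sum.inl ⟨k, by omega⟩
    else if k < j 0 + QLen f d (j 0) then Sum.inr (Sum.inl (j 0, k - j 0))
    else copyEmb f d (j 0) (leafPathVtx f d (Fin.tail j) (k - (j 0 + QLen f d (j 0))))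

section LeafPath

variable {f d : ℕ}

theorem leafPathVtx_succ_of_le (j : Fin (f + 1) → Fin (d + 1)) {k : ℕ} (hk : k ≤ j 0) :
    leafPathVtx (f + 1) d j k = Sum.inl ⟨k, by omega⟩ :=
  dif_pos hk

theorem leafPathVtx_succ_of_QLen_le (j : Fin (f + 1) → Fin (d + 1)) {k : ℕ}
    (hk : j 0 + QLen f d (j 0) ≤ k) : leafPathVtx (f + 1) d j k =
      copyEmb f d (j 0) (leafPathVtx f d (Fin.tail j) (k - (j 0 + QLen f d (j 0)))) :=
  (dif_neg (by have := two_le_QLen f d (j 0); omega)).trans (if_neg (by omega))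

theorem leafPathVtx_succ_cases (j : Fin (f + 1) → Fin (d + 1)) (k : ℕ) :
    (∃ hk : k ≤ j 0, leafPathVtx (f + 1) d j k = Sum.inl ⟨k, by omega⟩) ∨
    (j 0 < k ∧ k < j 0 + QLen f d (j 0) ∧
      leafPathVtx (f + 1) d j k = Sum.inr (Sum.inl (j 0, k - j 0))) ∨
    (j 0 + QLen f d (j 0) ≤ k ∧ leafPathVtx (f + 1) d j k =
      copyEmb f d (j 0) (leafPathVtx f d (Fin.tail j) (k - (j 0 + QLen f d (j 0))))) := by
  by_cases hk : k ≤ j 0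
  · exact Or.inl ⟨hk, leafPathVtx_succ_of_le j hk⟩
  by_cases hk' : k < j 0 + QLen f d (j 0)
  · exact Or.inr (Or.inl ⟨by omega, hk', (dif_neg hk).trans (if_pos hk')⟩)
  · exact Or.inr (Or.inr ⟨by omega, leafPathVtx_succ_of_QLen_le j (by omega)⟩)

theorem leafPathVtx_zero (j : Fin f → Fin (d + 1)) : leafPathVtx f d j 0 = rootVtx f d := by
  cases f with
  | zero => rfl
  | succ f => exact leafPathVtx_succ_of_le j (Nat.zero_le _)

theorem leafPathVtx_leafPathLength (j : Fin f → Fin (d + 1)) :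
    leafPathVtx f d j (leafPathLength f d j) = leafVtx f d j := by
  induction f with
  | zero => rfl
  | succ f ih =>
    rcases leafPathVtx_succ_cases j (leafPathLength (f + 1) d j) with ⟨hk, -⟩ | ⟨-, hk, -⟩ | ⟨-, h⟩
    · have := two_le_QLen f d (j 0); simp only [leafPathLength] at hk; omega
    · simp only [leafPathLength] at hk; omega
    · rw [h, leafPathLength, Nat.add_sub_cancel_left, ih]
      rfl

theorem vtxDepth_leafPathVtx (j : Fin f → Fin (d + 1)) {k : ℕ} (hk : k ≤ leafPathLength f d j) :
    vtxDepth f d (leafPathVtx f d j k) = k := by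
  induction f generalizing k with
  | zero => exact (Nat.le_zero.1 hk).symm
  | succ f ih =>
    simp only [leafPathLength] at hk
    rcases leafPathVtx_succ_cases j k with ⟨_, h⟩ | ⟨hk₁, -, h⟩ | ⟨hk₁, h⟩ <;> rw [h]
    · rfl
    · show j 0 + (k - j 0) = k; omega
    · show j 0 + QLen f d (j 0) + vtxDepth f d _ = k
      rw [ih (Fin.tail j) (by omega)]; omega

theorem rel_leafPathVtx (j : Fin f → Fin (d + 1)) {k : ℕ} (hk : k < leafPathLength f d j) :
    rel f d (leafPathVtx f d j k) (leafPathVtx f d j (k + 1)) := by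
  induction f generalizing k with
  | zero => exact absurd hk (Nat.not_lt_zero k)
  | succ f ih =>
    have ih_tail := ih (Fin.tail j) (k := k - (j 0 + QLen f d (j 0)))
    have hQ := two_le_QLen f d (j 0)
    have htail_zero := leafPathVtx_zero (Fin.tail j)
    simp only [leafPathLength] at hk
    rcases leafPathVtx_succ_cases j k with ⟨hk₁, h⟩ | ⟨hk₁, hk₂, h⟩ | ⟨hk₁, h⟩ <;>
    rcases leafPathVtx_succ_cases j (k + 1) with ⟨hk₁', h'⟩ | ⟨hk₁', hk₂', h'⟩ | ⟨hk₁', h'⟩ <;>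
    rw [h, h'] <;> simp only [rel, copyEmb]
    all_goals grind [Fin.ext_iff]

theorem adj_leafPathVtx (j : Fin f → Fin (d + 1)) {k : ℕ} (hk : k < leafPathLength f d j) :
    (Gf f d).Adj (leafPathVtx f d j k) (leafPathVtx f d j (k + 1)) := by
  refine (SimpleGraph.fromRel_adj _ _ _).2 ⟨fun h => ?_, Or.inl (rel_leafPathVtx j hk)⟩
  have := congrArg (vtxDepth f d) h
  rw [vtxDepth_leafPathVtx j hk.le, vtxDepth_leafPathVtx j hk] at this
  omega

def leafPath (f d : ℕ) (j : Fin f → Fin (d + 1)) :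
    (Gf f d).Walk (rootVtx f d) (leafVtx f d j) :=
  (SimpleGraph.Walk.ofFun _ (leafPathVtx f d j) (leafPathLength f d j)
    fun _ => adj_leafPathVtx j).copy (leafPathVtx_zero j) (leafPathVtx_leafPathLength j)

theorem isPath_leafPath (j : Fin f → Fin (d + 1)) : (leafPath f d j).IsPath := by
  refine (SimpleGraph.Walk.isPath_copy _ _ _).2 (SimpleGraph.Walk.isPath_ofFun _ _ ?_)
  exact Set.LeftInvOn.injOn (f₁' := vtxDepth f d) fun k hk => vtxDepth_leafPathVtx j hk

theorem length_leafPath (j : Fin f → Fin (d + 1)) :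
    (leafPath f d j).length = leafPathLength f d j := by
  rw [leafPath, SimpleGraph.Walk.length_copy, SimpleGraph.Walk.length_ofFun]

theorem mem_edges_leafPath {j : Fin f → Fin (d + 1)} {e : Sym2 (Vtx f d)} :
    e ∈ (leafPath f d j).edges ↔
      ∃ k < leafPathLength f d j, s(leafPathVtx f d j k, leafPathVtx f d j (k + 1)) = e := by
  rw [leafPath, SimpleGraph.Walk.edges_copy, SimpleGraph.Walk.mem_edges_ofFun]

theorem le_of_leafPathVtx_succ_eq_inl {j : Fin (f + 1) → Fin (d + 1)} {k : ℕ} {a : Fin (d + 1)}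
    (h : leafPathVtx (f + 1) d j k = Sum.inl a) : (a : ℕ) ≤ j 0 := by
  rcases leafPathVtx_succ_cases j k with ⟨hk, h'⟩ | ⟨-, -, h'⟩ | ⟨-, h'⟩ <;> rw [h'] at h
  · cases h; exact hk
  · cases h
  · cases h

theorem add_QLen_le_of_leafPathVtx_succ_eq_copyEmb {j : Fin (f + 1) → Fin (d + 1)} {k : ℕ}
    {i : Fin (d + 1)} {u : Vtx f d} (h : leafPathVtx (f + 1) d j k = copyEmb f d i u) :
    j 0 + QLen f d (j 0) ≤ k := by
  rcases leafPathVtx_succ_cases j k with ⟨_, h'⟩ | ⟨-, -, h'⟩ | ⟨hk, -⟩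
  · rw [h'] at h; cases h
  · rw [h'] at h; cases h
  · exact hk

theorem leafPathEdge_succ_eq_map_copyEmb (j : Fin (f + 1) → Fin (d + 1)) {k : ℕ}
    (hk : j 0 + QLen f d (j 0) ≤ k) :
    s(leafPathVtx (f + 1) d j k, leafPathVtx (f + 1) d j (k + 1)) =
      Sym2.map (copyEmb f d (j 0)) s(leafPathVtx f d (Fin.tail j) (k - (j 0 + QLen f d (j 0))),
        leafPathVtx f d (Fin.tail j) (k - (j 0 + QLen f d (j 0)) + 1)) := by
  rw [leafPathVtx_succ_of_QLen_le j hk, leafPathVtx_succ_of_QLen_le j (by omega),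
    Nat.sub_add_comm hk, Sym2.map_mk]

theorem copyEmb_injective (i : Fin (d + 1)) : Function.Injective (copyEmb f d i) :=
  fun _ _ h => congrArg Prod.snd (Sum.inr_injective (Sum.inr_injective h))

theorem leafPathEdge_not_mem_labelG (j : Fin f → Fin (d + 1)) {k : ℕ}
    (hk : k < leafPathLength f d j) :
    s(leafPathVtx f d j k, leafPathVtx f d j (k + 1)) ∉ labelG f d j := by
  induction f generalizing k with
  | zero => exact absurd hk (Nat.not_lt_zero k)
  | succ f ih =>
    simp only [leafPathLength] at hk
    rw [labelG, Set.mem_union]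
    rintro (htop | ⟨e, he, hcopy⟩)
    · split_ifs at htop with hd
      · rcases Sym2.eq_iff.1 (Set.mem_singleton_iff.1 htop) with ⟨-, h⟩ | ⟨h, -⟩ <;>
          exact absurd (le_of_leafPathVtx_succ_eq_inl h) (by simp)
      · exact htop
    · obtain ⟨u, -, hu⟩ := Sym2.mem_map.1 (hcopy ▸ Sym2.mem_mk_left _ _)
      have hk' := add_QLen_le_of_leafPathVtx_succ_eq_copyEmb hu.symm
      rw [leafPathEdge_succ_eq_map_copyEmb j hk'] at hcopy
      rw [(Sym2.map.injective (copyEmb_injective (j 0))) hcopy] at he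
      exact ih (Fin.tail j) (by omega) he

theorem lexLt_succ_cases {j j' : Fin (f + 1) → Fin (d + 1)} (h : lexLt j j') :
    j 0 < j' 0 ∨ j 0 = j' 0 ∧ lexLt (Fin.tail j) (Fin.tail j') := by
  obtain ⟨k, hk, hlt⟩ := h
  cases k using Fin.cases with
  | zero => exact Or.inl hlt
  | succ k =>
    exact Or.inr ⟨hk 0 k.succ_pos, k, fun m hm => hk m.succ (Fin.succ_lt_succ_iff.2 hm), hlt⟩

theorem exists_leafPathEdge_mem_labelG {j j' : Fin f → Fin (d + 1)} (h : lexLt j j') :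
    ∃ k < leafPathLength f d j',
      s(leafPathVtx f d j' k, leafPathVtx f d j' (k + 1)) ∈ labelG f d j := by
  induction f with
  | zero => exact h.elim fun k _ => k.elim0
  | succ f ih =>
    have := two_le_QLen f d (j' 0)
    rcases lexLt_succ_cases h with hlt | ⟨heq, htail⟩
    · have hd : (j 0 : ℕ) < d := by omega
      refine ⟨j 0, by simp only [leafPathLength]; omega, ?_⟩
      rw [leafPathVtx_succ_of_le j' hlt.le, leafPathVtx_succ_of_le j' hlt, labelG, dif_pos hd]
      exact Or.inl rfl
    · obtain ⟨k, hk, hmem⟩ := ih htail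
      refine ⟨j' 0 + QLen f d (j' 0) + k, by simp only [leafPathLength]; omega, ?_⟩
      rw [leafPathEdge_succ_eq_map_copyEmb j' (by omega), Nat.add_sub_cancel_left, labelG, ← heq]
      exact Or.inr ⟨_, hmem, rfl⟩

def QLenSlope : ℕ → ℕ → ℕ
  | 0, _ => 1
  | f + 1, d => depthG (f + 1) (d + 1) - 1

theorem add_QLen_add_mul_QLenSlope (f d : ℕ) (i : Fin (d + 1)) :
    i + QLen f d i + i * QLenSlope f d = QLen f d 0 := by
  cases f with
  | zero => simp only [QLen, QLenSlope, Fin.val_zero]; omega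
  | succ f =>
    have hD := six_le_depthG f d
    simp only [QLen, QLenSlope, Fin.val_zero, Nat.sub_zero]
    have hi : (i : ℕ) ≤ i * depthG (f + 1) (d + 1) := Nat.le_mul_of_pos_right _ (by omega)
    have hsplit : (d + 1) * depthG (f + 1) (d + 1) =
        (d + 1 - i) * depthG (f + 1) (d + 1) + i * depthG (f + 1) (d + 1) := by
      rw [← Nat.add_mul, Nat.sub_add_cancel i.isLt.le]
    rw [Nat.mul_sub_one]
    omega

theorem succ_mul_QLenSlope_le (f d : ℕ) : (d + 1) * QLenSlope f d ≤ QLenSlope (f + 1) d := by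
  cases f with
  | zero => simp only [QLenSlope, depthG]; omega
  | succ f =>
    have hD := six_le_depthG f d
    have hd : d + 1 ≤ (d + 1) * depthG (f + 1) (d + 1) := Nat.le_mul_of_pos_right _ (by omega)
    show (d + 1) * (depthG (f + 1) (d + 1) - 1) ≤ (d + 1) * depthG (f + 1) (d + 1) - 1
    rw [Nat.mul_sub_one]
    omega

theorem leafPathLength_lt_add_QLenSlope (j j' : Fin f → Fin (d + 1)) :
    leafPathLength f d j < leafPathLength f d j' + QLenSlope f d := by
  induction f with
  | zero => exact Nat.one_pos
  | succ f ih =>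
    have h := add_QLen_add_mul_QLenSlope f d (j 0)
    have h' := add_QLen_add_mul_QLenSlope f d (j' 0)
    have hd : (j' 0 : ℕ) * QLenSlope f d ≤ d * QLenSlope f d :=
      Nat.mul_le_mul_right _ (Nat.lt_succ_iff.1 (j' 0).isLt)
    have hs := succ_mul_QLenSlope_le f d
    have := ih (Fin.tail j) (Fin.tail j')
    simp only [leafPathLength]
    rw [Nat.succ_mul] at hs
    omega

theorem leafPathLength_lt_of_lexLt {j j' : Fin f → Fin (d + 1)} (h : lexLt j' j) :
    leafPathLength f d j < leafPathLength f d j' := by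
  induction f with
  | zero => exact h.elim fun k _ => k.elim0
  | succ f ih =>
    simp only [leafPathLength]
    rcases lexLt_succ_cases h with hlt | ⟨heq, htail⟩
    · have h := add_QLen_add_mul_QLenSlope f d (j 0)
      have h' := add_QLen_add_mul_QLenSlope f d (j' 0)
      have hs : (j' 0 : ℕ) * QLenSlope f d + QLenSlope f d ≤ j 0 * QLenSlope f d := by
        rw [← Nat.succ_mul]; exact Nat.mul_le_mul_right _ hlt
      have := leafPathLength_lt_add_QLenSlope (Fin.tail j) (Fin.tail j')
      omega
    · rw [heq]
      have := ih htail
      omega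

end LeafPath

theorem lower_bound_graph_path_properties_general (f d : ℕ)
    (j : Fin f → Fin (d + 1)) :
    (∃! p : (Gf f d).Walk (rootVtx f d) (leafVtx f d j), p.IsPath) ∧
    (∀ p : (Gf f d).Walk (rootVtx f d) (leafVtx f d j), p.IsPath →
      ∀ e ∈ p.edges, e ∉ labelG f d j) ∧
    (∀ j' : Fin f → Fin (d + 1), lexLt j j' →
      ∀ p : (Gf f d).Walk (rootVtx f d) (leafVtx f d j'), p.IsPath →
        ∃ e ∈ p.edges, e ∈ labelG f d j) ∧
    (∀ j' : Fin f → Fin (d + 1), lexLt j' j →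
      ∀ (p : (Gf f d).Walk (rootVtx f d) (leafVtx f d j'))
        (q : (Gf f d).Walk (rootVtx f d) (leafVtx f d j)),
        p.IsPath → q.IsPath → q.length < p.length) := by
  have eq_leafPath : ∀ j (p : (Gf f d).Walk (rootVtx f d) (leafVtx f d j)), p.IsPath →
      p = leafPath f d j := fun j p hp =>
    SimpleGraph.isPath_from_root_unique (rel_left_unique f d) (not_rel_rootVtx f d) p _ hp
      (isPath_leafPath j)
  refine ⟨⟨leafPath f d j, isPath_leafPath j, eq_leafPath j⟩, ?_, ?_, ?_⟩
  · intro p hp e he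
    rw [eq_leafPath j p hp, mem_edges_leafPath] at he
    obtain ⟨k, hk, rfl⟩ := he
    exact leafPathEdge_not_mem_labelG j hk
  · intro j' hlt p hp
    obtain ⟨k, hk, hmem⟩ := exists_leafPathEdge_mem_labelG (d := d) hlt
    exact ⟨_, (eq_leafPath j' p hp) ▸ mem_edges_leafPath.2 ⟨k, hk, rfl⟩, hmem⟩
  · intro j' hlt p q hp hq
    rw [eq_leafPath j' p hp, eq_leafPath j q hq, length_leafPath, length_leafPath]
    exact leafPathLength_lt_of_lexLt hlt

/-- In the lower-bound graph `G_f(d)` (here with `d+1 ≥ 1` path vertices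
per level), for every leaf `z_j` (addressed by `j`): (1) there is a unique path from the
root to `z_j`; (2) this path survives the deletion of the at most `f` edges of
`Label_f(z_j)`; (3) for every leaf `z_{j'}` to the right of `z_j` (i.e. `j <lex j'`), every
root-to-`z_{j'}` path uses an edge of `Label_f(z_j)`; and (4) for every leaf `z_{j'}` to the
left of `z_j`, the root-to-`z_{j'}` path is strictly longer than the root-to-`z_j` path. -/
theorem lower_bound_graph_path_properties (f d : ℕ) (hf : 1 ≤ f)
    (j : Fin f → Fin (d + 1)) :
    (∃! p : (Gf f d).Walk (rootVtx f d) (leafVtx f d j), p.IsPath) ∧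
    (∀ p : (Gf f d).Walk (rootVtx f d) (leafVtx f d j), p.IsPath →
      ∀ e ∈ p.edges, e ∉ labelG f d j) ∧
    (∀ j' : Fin f → Fin (d + 1), lexLt j j' →
      ∀ p : (Gf f d).Walk (rootVtx f d) (leafVtx f d j'), p.IsPath →
        ∃ e ∈ p.edges, e ∈ labelG f d j) ∧
    (∀ j' : Fin f → Fin (d + 1), lexLt j' j →
      ∀ (p : (Gf f d).Walk (rootVtx f d) (leafVtx f d j'))
        (q : (Gf f d).Walk (rootVtx f d) (leafVtx f d j)),
        p.IsPath → q.IsPath → q.length < p.length) :=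
  lower_bound_graph_path_properties_general f d j
end

section
/- Let G be a graph with n vertices, source s, and let D_f(G) = max over failure sets F of at most f−1 edges of dist(s, v, G \ F) over all v (the f-FT-diameter). Then there exists an f-failure FT-BFS structure H ⊆ G with O(D_f(G)^f · n) edges. -/
open SimpleGraph

namespace FTBFSAux

attribute [local instance] Classical.propDecidable

variable {V : Type*} [Fintype V] [DecidableEq V] (G : SimpleGraph V) (s : V)

/-- A chosen shortest walk from `s` to `v` in `G` minus the failure set `F`. -/
noncomputable def sp (F : Finset (Sym2 V)) (v : V)
    (h : (G.deleteEdges ↑F).Reachable s v) : (G.deleteEdges ↑F).Walk s v :=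
  (Reachable.exists_walk_length_eq_dist h).choose

lemma sp_length (F : Finset (Sym2 V)) (v : V)
    (h : (G.deleteEdges ↑F).Reachable s v) :
    (sp G s F v h).length = (G.deleteEdges ↑F).dist s v :=
  (Reachable.exists_walk_length_eq_dist h).choose_spec

/-- The family of "canonical" failure sets, built iteratively. -/
noncomputable def Fam (v : V) : ℕ → Finset (Finset (Sym2 V))
  | 0 => {∅}
  | (i+1) => Fam v i ∪ (Fam v i).biUnion (fun F =>
      if h : (G.deleteEdges ↑F).Reachable s v then
        (sp G s F v h).edges.toFinset.image (fun e => insert e F)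
      else ∅)

lemma Fam_mono (v : V) {i j : ℕ} (hij : i ≤ j) : Fam G s v i ⊆ Fam G s v j := by
  induction j with
  | zero => simpa [Nat.le_zero.mp hij] using Finset.Subset.refl _
  | succ j ih =>
    rcases Nat.lt_or_ge i (j+1) with h | h
    · exact (ih (Nat.lt_succ_iff.mp h)).trans (Finset.subset_union_left)
    · have : i = j + 1 := le_antisymm hij h
      subst this; exact Finset.Subset.refl _

lemma card_of_mem_Fam (v : V) {i : ℕ} {F : Finset (Sym2 V)} (hF : F ∈ Fam G s v i) :
    F.card ≤ i := by
  induction i generalizing F with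
  | zero => simp only [Fam, Finset.mem_singleton] at hF; simp [hF]
  | succ i ih =>
    simp only [Fam, Finset.mem_union, Finset.mem_biUnion] at hF
    rcases hF with hF | ⟨F', hF', hmem⟩
    · exact (ih hF).trans (Nat.le_succ i)
    · by_cases h : (G.deleteEdges ↑F').Reachable s v
      · rw [dif_pos h] at hmem
        obtain ⟨e, _, rfl⟩ := Finset.mem_image.mp hmem
        calc (insert e F').card ≤ F'.card + 1 := Finset.card_insert_le _ _
          _ ≤ i + 1 := by exact Nat.add_le_add_right (ih hF') 1
      · rw [dif_neg h] at hmem; exact absurd hmem (Finset.notMem_empty _)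

lemma insert_mem_Fam (v : V) {i : ℕ} {F : Finset (Sym2 V)} (hF : F ∈ Fam G s v i)
    (h : (G.deleteEdges ↑F).Reachable s v) {e : Sym2 V}
    (he : e ∈ (sp G s F v h).edges) : insert e F ∈ Fam G s v (i+1) := by
  simp only [Fam, Finset.mem_union, Finset.mem_biUnion]
  refine Or.inr ⟨F, hF, ?_⟩
  rw [dif_pos h]
  exact Finset.mem_image.mpr ⟨e, List.mem_toFinset.mpr he, rfl⟩

/-- Cardinality bound for the family. -/
lemma Fam_card (f Dft : ℕ)
    (hD : ∀ F : Finset (Sym2 V), F.card ≤ f - 1 → ∀ v : V,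
      (G.deleteEdges ↑F).Reachable s v → (G.deleteEdges ↑F).dist s v ≤ Dft)
    (v : V) : ∀ i, i ≤ f → (Fam G s v i).card ≤ (1 + Dft) ^ i := by
  intro i
  induction i with
  | zero => intro _; simp [Fam]
  | succ i ih =>
    intro hif
    have hi : i ≤ f := (Nat.le_succ i).trans hif
    have hcard : (Fam G s v i).card ≤ (1 + Dft) ^ i := ih hi
    have hbi : ((Fam G s v i).biUnion (fun F =>
        if h : (G.deleteEdges ↑F).Reachable s v then
          (sp G s F v h).edges.toFinset.image (fun e => insert e F)
        else ∅)).card ≤ (Fam G s v i).card * Dft := by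
      apply Finset.card_biUnion_le_card_mul
      intro F hF
      by_cases h : (G.deleteEdges ↑F).Reachable s v
      · rw [dif_pos h]
        calc ((sp G s F v h).edges.toFinset.image (fun e => insert e F)).card
            ≤ (sp G s F v h).edges.toFinset.card := Finset.card_image_le
          _ ≤ (sp G s F v h).edges.length := List.toFinset_card_le _
          _ = (sp G s F v h).length := (sp G s F v h).length_edges
          _ = (G.deleteEdges ↑F).dist s v := sp_length G s F v h
          _ ≤ Dft := by
              apply hD F _ v h
              have := card_of_mem_Fam G s v hF
              omega
      · rw [dif_neg h]; simp
    calc (Fam G s v (i+1)).card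
        ≤ (Fam G s v i).card + ((Fam G s v i).biUnion _).card := Finset.card_union_le _ _
      _ ≤ (1 + Dft) ^ i + (1 + Dft) ^ i * Dft := by
          refine Nat.add_le_add hcard (hbi.trans ?_)
          exact Nat.mul_le_mul_right _ hcard
      _ = (1 + Dft) ^ (i + 1) := by ring

/-- The edge set of the fault-tolerant BFS structure: last edges of canonical
shortest paths. -/
noncomputable def EH (f : ℕ) : Finset (Sym2 V) :=
  Finset.univ.biUnion fun v => (Fam G s v f).biUnion fun F =>
    if h : (G.deleteEdges ↑F).Reachable s v then
      (sp G s F v h).edges.getLast?.toFinset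
    else ∅

lemma EH_card (f Dft : ℕ)
    (hD : ∀ F : Finset (Sym2 V), F.card ≤ f - 1 → ∀ v : V,
      (G.deleteEdges ↑F).Reachable s v → (G.deleteEdges ↑F).dist s v ≤ Dft) :
    (EH G s f).card ≤ Fintype.card V * (1 + Dft) ^ f := by
  apply Finset.card_biUnion_le_card_mul
  intro v _
  calc ((Fam G s v f).biUnion _).card ≤ (Fam G s v f).card * 1 := by
        apply Finset.card_biUnion_le_card_mul
        intro F hF
        by_cases h : (G.deleteEdges ↑F).Reachable s v
        · rw [dif_pos h]
          rw [Option.card_toFinset]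
          cases (sp G s F v h).edges.getLast? <;> simp
        · rw [dif_neg h]; simp
    _ = (Fam G s v f).card := Nat.mul_one _
    _ ≤ (1 + Dft) ^ f := Fam_card G s f Dft hD v f le_rfl

lemma lastEdge_mem_EH (f : ℕ) (v : V) {F : Finset (Sym2 V)} (hF : F ∈ Fam G s v f)
    (h : (G.deleteEdges ↑F).Reachable s v) {e : Sym2 V}
    (he : (sp G s F v h).edges.getLast? = some e) : e ∈ EH G s f := by
  unfold EH
  rw [Finset.mem_biUnion]
  refine ⟨v, Finset.mem_univ v, ?_⟩
  rw [Finset.mem_biUnion]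
  refine ⟨F, hF, ?_⟩
  rw [dif_pos h, Option.mem_toFinset, he]; rfl

lemma deleteEdges_mono_le {F₀ F : Finset (Sym2 V)} (h : F₀ ⊆ F) :
    G.deleteEdges ↑F ≤ G.deleteEdges ↑F₀ := by
  intro a b hab
  rw [deleteEdges_adj] at hab ⊢
  exact ⟨hab.1, fun hc => hab.2 (h hc)⟩

lemma edge_notMem_of_walk {F : Finset (Sym2 V)} {a b : V}
    (p : (G.deleteEdges ↑F).Walk a b) {e : Sym2 V} (he : e ∈ p.edges) : e ∉ F := by
  intro hc
  have := p.edges_subset_edgeSet he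
  rw [edgeSet_deleteEdges] at this
  exact this.2 hc

/-- The descent lemma: every failure set can be replaced by a canonical one whose
chosen shortest path avoids the original failures. -/
lemma descent (f : ℕ) (v : V) :
    ∀ j i : ℕ, ∀ F₀ F : Finset (Sym2 V), i + j ≤ f → F₀ ∈ Fam G s v i → F₀ ⊆ F →
      F.card ≤ F₀.card + j → (G.deleteEdges ↑F).Reachable s v →
      ∃ (F' : Finset (Sym2 V)) (h' : (G.deleteEdges ↑F').Reachable s v),
        F' ∈ Fam G s v f ∧ F' ⊆ F ∧ ∀ e ∈ (sp G s F' v h').edges, e ∉ F := by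
  intro j
  induction j with
  | zero =>
    intro i F₀ F hif hF₀ hsub hcard hR
    have hEq : F₀ = F := Finset.eq_of_subset_of_card_le hsub (by omega)
    subst hEq
    exact ⟨F₀, hR, Fam_mono G s v (by omega) hF₀, Finset.Subset.refl _,
      fun e he => edge_notMem_of_walk G (sp G s F₀ v hR) he⟩
  | succ j ih =>
    intro i F₀ F hif hF₀ hsub hcard hR
    have h₀ : (G.deleteEdges ↑F₀).Reachable s v :=
      hR.mono (deleteEdges_mono_le G hsub)
    by_cases hdisj : ∀ e ∈ (sp G s F₀ v h₀).edges, e ∉ F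
    · exact ⟨F₀, h₀, Fam_mono G s v (by omega) hF₀, hsub, hdisj⟩
    · push_neg at hdisj
      obtain ⟨e, he, heF⟩ := hdisj
      have heF₀ : e ∉ F₀ := edge_notMem_of_walk G (sp G s F₀ v h₀) he
      have hF₁ : insert e F₀ ∈ Fam G s v (i+1) := insert_mem_Fam G s v hF₀ h₀ he
      have hsub₁ : insert e F₀ ⊆ F := Finset.insert_subset heF hsub
      have hcard₁ : F.card ≤ (insert e F₀).card + j := by
        rw [Finset.card_insert_of_notMem heF₀]; omega
      exact ih (i+1) (insert e F₀) F (by omega) hF₁ hsub₁ hcard₁ hR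

/-- Decomposition of a non-trivial walk into its body and last edge. -/
lemma walk_concat_decomp {G' : SimpleGraph V} {a b : V} (p : G'.Walk a b) (hab : b ≠ a) :
    ∃ (u : V) (q : G'.Walk a u) (ha : G'.Adj u b), p = q.concat ha := by
  cases p with
  | nil => exact absurd rfl hab
  | cons h p => exact Walk.exists_cons_eq_concat h p

/-- For every failure set of size at most `f` there is a shortest path whose
last edge lies in `EH`. -/
lemma exists_shortest_lastEdge (f : ℕ) (v : V) (F : Finset (Sym2 V)) (hF : F.card ≤ f)
    (hR : (G.deleteEdges ↑F).Reachable s v) (hvs : v ≠ s) :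
    ∃ (u : V) (q : (G.deleteEdges ↑F).Walk s u) (ha : (G.deleteEdges ↑F).Adj u v),
      (q.concat ha).length = (G.deleteEdges ↑F).dist s v ∧ s(u, v) ∈ EH G s f := by
  have h0 : (∅ : Finset (Sym2 V)) ∈ Fam G s v 0 := by simp [Fam]
  obtain ⟨F', h', hFam, hsub, hav⟩ :=
    descent G s f v f 0 ∅ F (by omega) h0 (Finset.empty_subset F) (by simpa using hF) hR
  -- the chosen path transfers to `G \ F`
  have hedges : ∀ e ∈ (sp G s F' v h').edges, e ∈ (G.deleteEdges (↑F : Set (Sym2 V))).edgeSet := by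
    intro e he
    rw [edgeSet_deleteEdges]
    have h1 := (sp G s F' v h').edges_subset_edgeSet he
    rw [edgeSet_deleteEdges] at h1
    exact ⟨h1.1, fun hc => hav e he hc⟩
  set p := sp G s F' v h' with hp
  set q₀ := p.transfer (G.deleteEdges ↑F) hedges with hq₀
  have hlenq₀ : q₀.length = p.length := p.length_transfer _
  have hedq₀ : q₀.edges = p.edges := p.edges_transfer _
  -- q₀ is shortest in `G \ F`
  have hle1 : (G.deleteEdges ↑F).dist s v ≤ q₀.length := dist_le q₀
  have hle2 : q₀.length ≤ (G.deleteEdges ↑F).dist s v := by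
    rw [hlenq₀, sp_length]
    obtain ⟨w, hw⟩ := hR.exists_walk_length_eq_dist
    calc (G.deleteEdges ↑F').dist s v ≤ (w.mapLe (deleteEdges_mono_le G hsub)).length :=
          dist_le _
      _ = w.length := Walk.length_map _ _
      _ = (G.deleteEdges ↑F).dist s v := hw
  have hq₀len : q₀.length = (G.deleteEdges ↑F).dist s v := le_antisymm hle2 hle1
  obtain ⟨u, q, ha, hdec⟩ := walk_concat_decomp q₀ hvs
  refine ⟨u, q, ha, by rw [← hdec]; exact hq₀len, ?_⟩
  have hlast : p.edges.getLast? = some s(u, v) := by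
    rw [← hedq₀, hdec]
    simp [Walk.edges_concat, List.concat_eq_append]
  exact lastEdge_mem_EH G s f v hFam h' hlast

/-- The FT-BFS structure. -/
noncomputable def HG (f : ℕ) : SimpleGraph V :=
  G.deleteEdges ((↑(EH G s f) : Set (Sym2 V))ᶜ)

lemma HG_le (f : ℕ) : HG G s f ≤ G := deleteEdges_le _

lemma HG_deleteEdges_adj (f : ℕ) (F : Finset (Sym2 V)) {a b : V} :
    ((HG G s f).deleteEdges ↑F).Adj a b ↔
      G.Adj a b ∧ s(a, b) ∈ EH G s f ∧ s(a, b) ∉ F := by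
  simp only [HG, deleteEdges_adj, Set.mem_compl_iff, Finset.mem_coe, not_not]
  tauto

/-- The key lemma: short walks exist in `H \ F`. -/
lemma key (f : ℕ) (F : Finset (Sym2 V)) (hF : F.card ≤ f) :
    ∀ d : ℕ, ∀ v : V, (G.deleteEdges ↑F).Reachable s v →
      (G.deleteEdges ↑F).dist s v ≤ d →
      ∃ w : ((HG G s f).deleteEdges ↑F).Walk s v, w.length ≤ d := by
  intro d
  induction d with
  | zero =>
    intro v hR hd
    have h0 : (G.deleteEdges ↑F).dist s v = 0 := Nat.le_zero.mp hd
    have : s = v ∨ ¬(G.deleteEdges ↑F).Reachable s v :=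
      dist_eq_zero_iff_eq_or_not_reachable.mp h0
    rcases this with rfl | h
    · exact ⟨Walk.nil, by simp⟩
    · exact absurd hR h
  | succ d ih =>
    intro v hR hd
    by_cases hle : (G.deleteEdges ↑F).dist s v ≤ d
    · obtain ⟨w, hw⟩ := ih v hR hle
      exact ⟨w, hw.trans (Nat.le_succ d)⟩
    · have hdist : (G.deleteEdges ↑F).dist s v = d + 1 := by omega
      have hvs : v ≠ s := by
        intro h
        subst h
        rw [SimpleGraph.dist_self] at hdist; omega
      obtain ⟨u, q, ha, hlen, hEHmem⟩ := exists_shortest_lastEdge G s f v F hF hR hvs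
      have hqlen : q.length = d := by
        rw [Walk.length_concat, hdist] at hlen; omega
      have hRu : (G.deleteEdges ↑F).Reachable s u := ⟨q⟩
      have hdu : (G.deleteEdges ↑F).dist s u ≤ d := hqlen ▸ dist_le q
      obtain ⟨w, hw⟩ := ih u hRu hdu
      have hadj : ((HG G s f).deleteEdges ↑F).Adj u v := by
        rw [HG_deleteEdges_adj]
        have h1 := ha
        rw [deleteEdges_adj] at h1
        exact ⟨h1.1, hEHmem, by simpa using h1.2⟩
      exact ⟨w.concat hadj, by rw [Walk.length_concat]; omega⟩

end FTBFSAux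

open FTBFSAux

/-- Let `G` be a graph on `n` vertices with source `s`, and let `Dft` be
an upper bound on the `f`-FT-diameter `D_f(G) = max_{|F| ≤ f-1, v} dist(s, v, G \ F)`
(over reachable pairs).  Then there exists an `f`-failure FT-BFS structure `H ⊆ G`
(preserving reachability and exact distances from `s` under any `≤ f` edge failures) with
`O(Dft^f · n)` edges, the implied constant depending only on `f`. -/
theorem ft_bfs_small_diameter_upper_bound (f : ℕ) (hf : 1 ≤ f) :
    ∃ C : ℝ, 0 < C ∧
      ∀ (n : ℕ) (G : SimpleGraph (Fin n)) (s : Fin n) (Dft : ℕ),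
        (∀ F : Finset (Sym2 (Fin n)), F.card ≤ f - 1 → ∀ v : Fin n,
          (G.deleteEdges ↑F).Reachable s v → (G.deleteEdges ↑F).dist s v ≤ Dft) →
        ∃ H : SimpleGraph (Fin n), H ≤ G ∧
          (∀ v : Fin n, ∀ F : Finset (Sym2 (Fin n)), F.card ≤ f →
            ((G.deleteEdges ↑F).Reachable s v → (H.deleteEdges ↑F).Reachable s v) ∧
            (H.deleteEdges ↑F).dist s v = (G.deleteEdges ↑F).dist s v) ∧
          (H.edgeSet.ncard : ℝ) ≤ C * (Dft : ℝ) ^ f * (n : ℝ) := by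
  refine ⟨2 ^ f, by positivity, ?_⟩
  intro n G s Dft hD
  refine ⟨HG G s f, HG_le G s f, ?_, ?_⟩
  · -- distance preservation
    intro v F hF
    have hHle : (HG G s f).deleteEdges ↑F ≤ G.deleteEdges ↑F := by
      intro a b hab
      rw [deleteEdges_adj] at hab ⊢
      exact ⟨HG_le G s f hab.1, hab.2⟩
    by_cases hR : (G.deleteEdges ↑F).Reachable s v
    · obtain ⟨w, hw⟩ := key G s f F hF ((G.deleteEdges ↑F).dist s v) v hR le_rfl
      have hreach : ((HG G s f).deleteEdges ↑F).Reachable s v := ⟨w⟩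
      refine ⟨fun _ => hreach, le_antisymm ((dist_le w).trans hw) ?_⟩
      obtain ⟨w', hw'⟩ := hreach.exists_walk_length_eq_dist
      calc (G.deleteEdges ↑F).dist s v ≤ (w'.mapLe hHle).length := dist_le _
        _ = w'.length := Walk.length_map _ _
        _ = ((HG G s f).deleteEdges ↑F).dist s v := hw'
    · have hnR : ¬((HG G s f).deleteEdges ↑F).Reachable s v :=
        fun h => hR (h.mono hHle)
      refine ⟨fun h => absurd h hR, ?_⟩
      rw [dist_eq_zero_of_not_reachable hnR, dist_eq_zero_of_not_reachable hR]
  · -- edge count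
    have hsub : (HG G s f).edgeSet ⊆ ↑(EH G s f) := by
      intro e he
      rw [HG, edgeSet_deleteEdges] at he
      simpa using he.2
    have hncard : (HG G s f).edgeSet.ncard ≤ (EH G s f).card := by
      rw [← Set.ncard_coe_finset]
      exact Set.ncard_le_ncard hsub (Finset.finite_toSet _)
    by_cases hDft : Dft = 0
    · -- degenerate case: only `s` is reachable, `EH` is empty
      subst hDft
      have hEH : EH G s f = ∅ := by
        rw [Finset.eq_empty_iff_forall_notMem]
        intro e he
        simp only [EH, Finset.mem_biUnion, Finset.mem_univ, true_and] at he
        obtain ⟨v, F, hFam, hmem⟩ := he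
        by_cases h : (G.deleteEdges ↑F).Reachable s v
        · rw [dif_pos h, Option.mem_toFinset] at hmem
          have hRG : G.Reachable s v := h.mono (deleteEdges_le _)
          have hds : G.dist s v = 0 := by
            have h0 := hD ∅ (by simp) v (by simpa using hRG)
            simpa using h0
          have hsv : s = v := by
            rcases dist_eq_zero_iff_eq_or_not_reachable.mp hds with h1 | h1
            · exact h1
            · exact absurd hRG h1
          subst hsv
          have hd0 : (G.deleteEdges ↑F).dist s s = 0 := dist_self
          have hlen : (sp G s F s h).length = 0 := by rw [sp_length, hd0]
          have : (sp G s F s h).edges = [] := by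
            have := (sp G s F s h).length_edges
            rw [hlen] at this
            exact List.length_eq_zero_iff.mp this
          rw [this] at hmem
          simp at hmem
        · rw [dif_neg h] at hmem
          exact absurd hmem (Finset.notMem_empty _)
      rw [hEH] at hncard
      simp only [Finset.card_empty, Nat.le_zero] at hncard
      rw [hncard]
      have hz : ((0 : ℕ) : ℝ) ^ f = 0 := by
        rw [Nat.cast_zero]; exact zero_pow (by omega)
      rw [hz]
      norm_num
    · -- main case: `Dft ≥ 1`
      have h1D : 1 ≤ Dft := Nat.one_le_iff_ne_zero.mpr hDft
      have hEHcard : (EH G s f).card ≤ Fintype.card (Fin n) * (1 + Dft) ^ f :=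
        EH_card G s f Dft hD
      have hnat : (EH G s f).card ≤ n * (2 * Dft) ^ f := by
        calc (EH G s f).card ≤ Fintype.card (Fin n) * (1 + Dft) ^ f := hEHcard
          _ ≤ n * (2 * Dft) ^ f := by
              rw [Fintype.card_fin]
              exact Nat.mul_le_mul_left n (Nat.pow_le_pow_left (by omega) f)
      calc ((HG G s f).edgeSet.ncard : ℝ) ≤ ((EH G s f).card : ℝ) := by
            exact_mod_cast hncard
        _ ≤ ((n * (2 * Dft) ^ f : ℕ) : ℝ) := by exact_mod_cast hnat
        _ = 2 ^ f * (Dft : ℝ) ^ f * (n : ℝ) := by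
            push_cast
            ring
end

section
/- Greedy set-cover based FT-MBFS construction: given a graph G on n vertices, a source set S, and constant f, the algorithm that for each vertex v solves (via an O(log n)-approximate set cover) the problem of covering all pairs ⟨s, F⟩ (s ∈ S, |F| ≤ f) by neighbor-sets S_{v,u} = {⟨s,F⟩ : dist(s,u,G\F) = dist(s,v,G\F) − 1}, and keeps edge (u,v) for each chosen set, outputs a valid f-failure FT-MBFS structure H for S. -/
open SimpleGraph

/-- Set-cover based FT-MBFS construction: let `G` be a graph, `S` a set of
sources, `f` the number of tolerated failures, and `H ≤ G` a subgraph.  Suppose that for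
every vertex `v` the chosen edges of `H` into `v` cover the universe of pairs `⟨s, F⟩`
(`s ∈ S`, `|F| ≤ f`): whenever `v` is reachable from `s` in `G \ F` and `v ≠ s`, some edge
`(u,v)` of `H` is the last edge of a shortest `s–v` path in `G \ F` (i.e. `u` and `v` are
adjacent in `G \ F` and `dist(s,u,G\F) + 1 = dist(s,v,G\F)`).  Then `H` is a valid
`f`-failure FT-MBFS structure for `S`. -/
theorem set_cover_gives_ft_mbfs {V : Type*} [Fintype V] [DecidableEq V]
    (G : SimpleGraph V) (S : Set V) (f : ℕ) (H : SimpleGraph V) (hHG : H ≤ G)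
    (hcov : ∀ v : V, ∀ s ∈ S, ∀ F : Finset (Sym2 V), F.card ≤ f →
      (G.deleteEdges ↑F).Reachable s v → v ≠ s →
      ∃ u : V, H.Adj u v ∧ (G.deleteEdges ↑F).Adj u v ∧
        (G.deleteEdges ↑F).dist s u + 1 = (G.deleteEdges ↑F).dist s v) :
    ∀ s ∈ S, ∀ v : V, ∀ F : Finset (Sym2 V), F.card ≤ f →
      ((G.deleteEdges ↑F).Reachable s v → (H.deleteEdges ↑F).Reachable s v) ∧
      (H.deleteEdges ↑F).dist s v = (G.deleteEdges ↑F).dist s v := by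
  intro s hs v F hF
  have hle : H.deleteEdges ↑F ≤ G.deleteEdges ↑F := by
    intro a b hab
    rw [SimpleGraph.deleteEdges_adj] at hab ⊢
    exact ⟨hHG hab.1, hab.2⟩
  have key : ∀ n : ℕ, ∀ v : V, (G.deleteEdges ↑F).Reachable s v →
      (G.deleteEdges ↑F).dist s v = n →
      (H.deleteEdges ↑F).Reachable s v ∧ (H.deleteEdges ↑F).dist s v = n := by
    intro n
    induction n with
    | zero =>
      intro v hr hd
      have hvs : s = v := (hr.dist_eq_zero_iff).mp hd
      subst hvs
      exact ⟨SimpleGraph.Reachable.refl s, SimpleGraph.dist_self⟩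
    | succ n ih =>
      intro v hr hd
      have hvs : v ≠ s := by
        rintro rfl
        rw [SimpleGraph.dist_self] at hd
        omega
      obtain ⟨u, huH, huG, hdu⟩ := hcov v s hs F hF hr hvs
      have hru : (G.deleteEdges ↑F).Reachable s u := hr.trans ⟨SimpleGraph.Walk.cons huG.symm SimpleGraph.Walk.nil⟩
      have hdun : (G.deleteEdges ↑F).dist s u = n := by omega
      obtain ⟨hru', hdu'⟩ := ih u hru hdun
      have hadjH : (H.deleteEdges ↑F).Adj u v := by
        rw [SimpleGraph.deleteEdges_adj]
        exact ⟨huH, (SimpleGraph.deleteEdges_adj.mp huG).2⟩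
      have hrv' : (H.deleteEdges ↑F).Reachable s v := hru'.trans ⟨SimpleGraph.Walk.cons hadjH SimpleGraph.Walk.nil⟩
      refine ⟨hrv', le_antisymm ?_ ?_⟩
      · obtain ⟨q, hq⟩ := hru'.exists_walk_length_eq_dist
        have := SimpleGraph.dist_le (q.concat hadjH)
        rw [SimpleGraph.Walk.length_concat, hq, hdu'] at this
        exact this
      · -- lower bound: dist in G\F ≤ dist in H\F
        obtain ⟨p, hp⟩ := hrv'.exists_walk_length_eq_dist
        have : (G.deleteEdges ↑F).dist s v ≤ p.length := by
          have := SimpleGraph.dist_le (p.mapLe hle)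
          simpa using this
        omega
  by_cases hr : (G.deleteEdges ↑F).Reachable s v
  · exact ⟨fun _ => (key _ v hr rfl).1, (key _ v hr rfl).2⟩
  · have hnr : ¬ (H.deleteEdges ↑F).Reachable s v := fun h =>
      hr (h.mono hle)
    constructor
    · intro h; exact absurd h hr
    · rw [SimpleGraph.dist_eq_zero_of_not_reachable hr, SimpleGraph.dist_eq_zero_of_not_reachable hnr]
end

section
/- Conversely, for every valid f-failure FT-MBFS structure H ⊆ G for source set S, and for every vertex v, the collection {S_{v,u} : (u,v) ∈ E(H) and (u,v) is the last edge of some canonical shortest s–v path in H\F for some ⟨s,F⟩} covers the universe U of all pairs ⟨s,F⟩ with s ∈ S and |F| ≤ f. -/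
open SimpleGraph

/-- Conversely, every valid `f`-failure FT-MBFS structure `H ⊆ G` for the
source set `S` induces, at every vertex `v`, a cover of the universe of pairs `⟨s, F⟩`
(`s ∈ S`, `|F| ≤ f`) by the sets `S_{v,u} = {⟨s,F⟩ : dist(s,u,G\F) = dist(s,v,G\F) − 1}` of
neighbors `u` with `(u,v) ∈ E(H)`: for every pair `⟨s,F⟩` with `v` reachable from `s` in
`G \ F` and `v ≠ s`, there is an edge `(u,v)` of `H` with
`dist(s,u,G\F) + 1 = dist(s,v,G\F)`. -/
theorem ft_mbfs_gives_set_cover {V : Type*} [Fintype V] [DecidableEq V]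
    (G : SimpleGraph V) (S : Set V) (f : ℕ) (H : SimpleGraph V) (hHG : H ≤ G)
    (hFT : ∀ s ∈ S, ∀ v : V, ∀ F : Finset (Sym2 V), F.card ≤ f →
      ((G.deleteEdges ↑F).Reachable s v → (H.deleteEdges ↑F).Reachable s v) ∧
      (H.deleteEdges ↑F).dist s v = (G.deleteEdges ↑F).dist s v) :
    ∀ v : V, ∀ s ∈ S, ∀ F : Finset (Sym2 V), F.card ≤ f →
      (G.deleteEdges ↑F).Reachable s v → v ≠ s →
      ∃ u : V, H.Adj u v ∧
        (G.deleteEdges ↑F).dist s u + 1 = (G.deleteEdges ↑F).dist s v := by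
  intro v s hs F hF hreach hvs
  obtain ⟨hr, hdv⟩ := hFT s hs v F hF
  have hle : H.deleteEdges ↑F ≤ G.deleteEdges ↑F := by
    intro a b hab
    rw [deleteEdges_adj] at hab ⊢
    exact ⟨hHG hab.1, hab.2⟩
  obtain ⟨p, hp⟩ := (hr hreach).exists_walk_length_eq_dist
  cases hq : p.reverse with
  | nil => exact absurd rfl hvs
  | @cons _ u _ h q =>
    refine ⟨u, (SimpleGraph.deleteEdges_le _ h.symm : H.Adj u v), ?_⟩
    have hplen : p.length = q.length + 1 := by
      rw [← SimpleGraph.Walk.length_reverse, hq, SimpleGraph.Walk.length_cons]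
    have hdu := (hFT s hs u F hF).2
    have h2 : (H.deleteEdges ↑F).dist s u ≤ q.length := by
      simpa using SimpleGraph.dist_le q.reverse
    obtain ⟨w, hw⟩ := ((q.reverse).mapLe hle).reachable.exists_walk_length_eq_dist
    have h3 : (G.deleteEdges ↑F).dist s v ≤ (G.deleteEdges ↑F).dist s u + 1 := by
      have := SimpleGraph.dist_le (w.concat (hle h.symm))
      simpa [SimpleGraph.Walk.length_concat, hw] using this
    omega
end

section
/- In an n-vertex graph, suppose a family of t paths to a common endpoint v is partitioned so that each path P_i has a designated vertex a_i with the suffixes P_i[a_i,v] \ {v} pairwise vertex-disjoint, and the designated vertices a_i all lie on a single fixed path D and are pairwise distinct. Then, ordering the paths by increasing distance from a_i to v along D, the i-th suffix has length at least i−1, and hence t ≤ 1 + √(2n). -/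
private lemma strictMono_fin_le {t : ℕ} {f : Fin t → ℕ} (hf : StrictMono f) :
    ∀ i : Fin t, (i : ℕ) ≤ f i := by
  have key : ∀ k (hk : k < t), k ≤ f ⟨k, hk⟩ := by
    intro k
    induction k with
    | zero => intro _; exact Nat.zero_le _
    | succ m ih =>
        intro hk
        have hm : m < t := Nat.lt_of_succ_lt hk
        have h1 : f ⟨m, hm⟩ < f ⟨m + 1, hk⟩ := hf (by simp [Fin.lt_def])
        exact Nat.lt_of_le_of_lt (ih hm) h1
  intro i
  simpa using key i.val i.isLt

/-- In an `n`-vertex graph, suppose `t` paths `Q i` to a common endpoint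
`v` have designated starting vertices `a i`, the suffixes `Q i \ {v}` are pairwise
vertex-disjoint, the `a i` all lie on a single fixed path `D` and are pairwise distinct,
and each suffix is at least as long as the remaining distance from `a i` to the end of `D`.
Then, ordering the paths by increasing distance from `a i` to `v` along `D`, the `i`-th
suffix (0-indexed) has length at least `i`, and hence `t ≤ 1 + √(2n)`. -/
theorem per_detour_counting {V : Type*} [Fintype V] [DecidableEq V]
    (G : SimpleGraph V) (n : ℕ) (hn : Fintype.card V = n)
    (v p q : V) (D : G.Walk p q) (hD : D.IsPath)
    (t : ℕ) (a : Fin t → V)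
    (ha : ∀ i, a i ∈ D.support) (hinj : Function.Injective a)
    (Q : (i : Fin t) → G.Walk (a i) v) (hQ : ∀ i, (Q i).IsPath)
    (hdisj : ∀ i j, i ≠ j → ∀ x ∈ (Q i).support, x ∈ (Q j).support → x = v)
    (hlen : ∀ i, (D.dropUntil (a i) (ha i)).length ≤ (Q i).length) :
    ∃ σ : Equiv.Perm (Fin t),
      (∀ i : Fin t, (i : ℕ) ≤ (Q (σ i)).length) ∧
      (t : ℝ) ≤ 1 + Real.sqrt (2 * n) := by
  -- the vertex `a i` is recovered from the length of `takeUntil`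
  have hgetVert : ∀ i, D.getVert (D.takeUntil (a i) (ha i)).length = a i := by
    intro i
    have hspec := D.take_spec (ha i)
    set T := D.takeUntil (a i) (ha i) with hT
    set R := D.dropUntil (a i) (ha i) with hR
    calc D.getVert T.length = (T.append R).getVert T.length := by rw [hspec]
      _ = a i := by
          rw [SimpleGraph.Walk.getVert_append]
          simp
  -- injectivity of dropUntil lengths
  set g : Fin t → ℕ := fun i => (D.dropUntil (a i) (ha i)).length with hg
  have hsum : ∀ i, (D.takeUntil (a i) (ha i)).length + g i = D.length := by
    intro i
    rw [hg, ← SimpleGraph.Walk.length_append]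
    rw [D.take_spec (ha i)]
  have hginj : Function.Injective g := by
    intro i j hij
    have htij : (D.takeUntil (a i) (ha i)).length = (D.takeUntil (a j) (ha j)).length := by
      have h1 := hsum i
      have h2 := hsum j
      omega
    apply hinj
    rw [← hgetVert i, ← hgetVert j, htij]
  -- sort
  set σ := Tuple.sort g with hσ
  have hmono : StrictMono (g ∘ σ) :=
    (Tuple.monotone_sort g).strictMono_of_injective (hginj.comp σ.injective)
  have hord : ∀ i : Fin t, (i : ℕ) ≤ (Q (σ i)).length := fun i =>
    le_trans (strictMono_fin_le hmono i) (hlen (σ i))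
  refine ⟨σ, hord, ?_⟩
  -- counting
  set S : Fin t → Finset V := fun i => ((Q i).support.toFinset).erase v with hS
  have hcard : ∀ i, (S i).card = (Q i).length := by
    intro i
    have hnd := (hQ i).support_nodup
    rw [hS]
    rw [Finset.card_erase_of_mem (by simp [SimpleGraph.Walk.end_mem_support]),
      List.toFinset_card_of_nodup hnd, SimpleGraph.Walk.length_support]
    omega
  have hdisjS : ∀ i j : Fin t, i ≠ j → Disjoint (S i) (S j) := by
    intro i j hij
    rw [Finset.disjoint_left]
    intro x hxi hxj
    rw [hS] at hxi hxj
    simp only [Finset.mem_erase, List.mem_toFinset] at hxi hxj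
    exact hxi.1 (hdisj i j hij x hxi.2 hxj.2)
  have hbound : ∑ i : Fin t, (Q i).length ≤ n := by
    have := Finset.card_biUnion (s := (Finset.univ : Finset (Fin t))) (t := S)
      (fun i _ j _ h => hdisjS i j h)
    calc ∑ i : Fin t, (Q i).length = ∑ i : Fin t, (S i).card := by
            simp [hcard]
      _ = (Finset.univ.biUnion S).card := this.symm
      _ ≤ Fintype.card V := Finset.card_le_univ _
      _ = n := hn
  have hsum2 : ∑ i : Fin t, (i : ℕ) ≤ ∑ i : Fin t, (Q i).length := by
    rw [← Equiv.sum_comp σ (fun i => (Q i).length)]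
    exact Finset.sum_le_sum fun i _ => hord i
  have hgauss : (∑ i : Fin t, (i : ℕ)) * 2 = t * (t - 1) := by
    rw [Fin.sum_univ_eq_sum_range (fun i => i) t]
    exact Finset.sum_range_id_mul_two t
  have hkey : t * (t - 1) ≤ 2 * n := by
    omega
  -- finish
  rcases Nat.eq_zero_or_pos t with rfl | ht
  · simp only [Nat.cast_zero]; positivity
  have hsq : ((t - 1 : ℕ) : ℝ) ^ 2 ≤ (2 * n : ℝ) := by
    have h1 : (t - 1) * (t - 1) ≤ 2 * n := le_trans (Nat.mul_le_mul_right _ (Nat.sub_le t 1)) hkey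
    calc ((t - 1 : ℕ) : ℝ) ^ 2 = (((t - 1) * (t - 1) : ℕ) : ℝ) := by push_cast; ring
      _ ≤ ((2 * n : ℕ) : ℝ) := by exact_mod_cast h1
      _ = (2 * n : ℝ) := by push_cast; ring
  have hle : ((t - 1 : ℕ) : ℝ) ≤ Real.sqrt (2 * n) := by
    rw [← Real.sqrt_sq (by positivity : (0:ℝ) ≤ ((t-1:ℕ):ℝ))]
    exact Real.sqrt_le_sqrt hsq
  have hc : ((t - 1 : ℕ) : ℝ) = (t : ℝ) - 1 := by
    rw [Nat.cast_sub ht]; simp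
  linarith
end
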